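/- arXiv:2004.09102 — 5 statements merged into one kernel-verified Lean document; each statement's English description precedes it below -/
import Mathlib

section
/- Let K, J ∈ L¹(ℝ) be nonnegative even functions that are nonincreasing on (0, +∞). Then K * J is (a.e. equal to) an even function nonincreasing on (0, +∞). -/
/-!
The convolution `∫ K (x - y) J y` is even because `K` and `J` are. For `0 < x₁ ≤ x₂`
put `s = x₁ + x₂` and compare the integrands at the reflected points `y` and `s - y`: on the
side `2y ≤ s` both `|x₁ - y| ≤ |x₂ - y|` and `|y| ≤ |s - y|`, on the other side both reverse, so
by the rearrangement inequality
`K (x₂ - y) J y + K (x₁ - y) J (s - y) ≤ K (x₁ - y) J y + K (x₂ - y) J (s - y)`.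
Since `K` is even, integrating this inequality gives `2 (K * J) x₂ ≤ 2 (K * J) x₁`.
-/

open MeasureTheory Real Set Filter

lemma Function.Even.le_of_abs_le {f : ℝ → ℝ} (he : f.Even) (hm : AntitoneOn f (Ioi 0))
    {u v : ℝ} (hu : u ≠ 0) (huv : |u| ≤ |v|) : f v ≤ f u := by
  have habs : ∀ w, f |w| = f w := fun w => by
    rcases abs_choice w with h | h <;> rw [h]
    exact he w
  rw [← habs u, ← habs v]
  exact hm (abs_pos.2 hu) ((abs_pos.2 hu).trans_le huv) huv

lemma integral_mono_of_add_comp_sub_left_le {f g : ℝ → ℝ} (hf : Integrable f)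
    (hg : Integrable g) (s : ℝ) (h : ∀ᵐ y, f y + f (s - y) ≤ g y + g (s - y)) :
    ∫ y, f y ≤ ∫ y, g y := by
  have hle : ∫ y, (f y + f (s - y)) ≤ ∫ y, (g y + g (s - y)) :=
    integral_mono_ae (hf.add (hf.comp_sub_left s)) (hg.add (hg.comp_sub_left s)) h
  rw [integral_add hf (hf.comp_sub_left s), integral_add hg (hg.comp_sub_left s),
    integral_sub_left_eq_self f volume s, integral_sub_left_eq_self g volume s] at hle
  linarith

noncomputable def convolve (K J : ℝ → ℝ) (x : ℝ) : ℝ := ∫ y, K (x - y) * J y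

section Convolution

variable {K J : ℝ → ℝ}

lemma convolve_neg (hK : K.Even) (hJ : J.Even) (x : ℝ) : convolve K J (-x) = convolve K J x := by
  have h : ∀ y, K (-x - -y) * J (-y) = K (x - y) * J y := fun y => by
    rw [hJ, show -x - -y = -(x - y) by ring, hK]
  simp only [convolve, ← integral_neg_eq_self (fun y => K (-x - y) * J y), h]

/-- Either `|y|` or `|x - y|` is at least `|x| / 2`, where `J` resp. `K` is at most its value at
`|x| / 2`. -/
lemma mul_le_add_of_even_antitoneOn (hK₀ : ∀ x, 0 ≤ K x) (hJ₀ : ∀ x, 0 ≤ J x)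
    (hK : K.Even) (hJ : J.Even) (hKm : AntitoneOn K (Ioi 0)) (hJm : AntitoneOn J (Ioi 0))
    {x : ℝ} (hx : x ≠ 0) (y : ℝ) :
    K (x - y) * J y ≤ K (|x| / 2) * J y + J (|x| / 2) * K (x - y) := by
  have hx2 : |x| / 2 ≠ 0 := by positivity
  have habs : |(|x| / 2)| = |x| / 2 := abs_of_nonneg (by positivity)
  rcases le_or_gt (|x| / 2) |y| with hy | hy
  · have hJy : J y ≤ J (|x| / 2) := hJ.le_of_abs_le hJm hx2 (habs.trans_le hy)
    nlinarith [hK₀ (x - y), hK₀ (|x| / 2), hJ₀ y]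
  · have hxy : |x| / 2 ≤ |x - y| := by linarith [abs_sub_abs_le_abs_sub x y]
    have hKxy : K (x - y) ≤ K (|x| / 2) := hK.le_of_abs_le hKm hx2 (habs.trans_le hxy)
    nlinarith [hK₀ (x - y), hJ₀ y, hJ₀ (|x| / 2)]

lemma integrable_mul_comp_sub_of_even_antitoneOn (hKi : Integrable K) (hJi : Integrable J)
    (hK₀ : ∀ x, 0 ≤ K x) (hJ₀ : ∀ x, 0 ≤ J x) (hK : K.Even) (hJ : J.Even)
    (hKm : AntitoneOn K (Ioi 0)) (hJm : AntitoneOn J (Ioi 0)) {x : ℝ} (hx : x ≠ 0) :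
    Integrable (fun y => K (x - y) * J y) := by
  refine ((hJi.const_mul (K (|x| / 2))).add
    ((hKi.comp_sub_left x).const_mul (J (|x| / 2)))).mono'
    ((hKi.comp_sub_left x).aestronglyMeasurable.mul hJi.aestronglyMeasurable)
    (Eventually.of_forall fun y => ?_)
  rw [norm_of_nonneg (mul_nonneg (hK₀ _) (hJ₀ _))]
  exact mul_le_add_of_even_antitoneOn hK₀ hJ₀ hK hJ hKm hJm hx y

lemma mul_add_mul_le_of_even_antitoneOn (hK : K.Even) (hJ : J.Even)
    (hKm : AntitoneOn K (Ioi 0)) (hJm : AntitoneOn J (Ioi 0)) {x₁ x₂ y : ℝ}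
    (hx₁ : 0 < x₁) (hx : x₁ ≤ x₂) (hy : y ∉ ({0, x₁, x₂, x₁ + x₂} : Set ℝ)) :
    K (x₂ - y) * J y + K (x₁ - y) * J (x₁ + x₂ - y)
      ≤ K (x₁ - y) * J y + K (x₂ - y) * J (x₁ + x₂ - y) := by
  simp only [mem_insert_iff, mem_singleton_iff, not_or] at hy
  obtain ⟨hy₀, hy₁, hy₂, hys⟩ := hy
  suffices 0 ≤ (K (x₁ - y) - K (x₂ - y)) * (J y - J (x₁ + x₂ - y)) by linarith
  rcases le_total (2 * y) (x₁ + x₂) with h | h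
  · have hK' := hK.le_of_abs_le hKm (sub_ne_zero.2 (Ne.symm hy₁)) (v := x₂ - y)
      (sq_le_sq.1 (by nlinarith))
    have hJ' := hJ.le_of_abs_le hJm hy₀ (v := x₁ + x₂ - y) (sq_le_sq.1 (by nlinarith))
    exact mul_nonneg (sub_nonneg.2 hK') (sub_nonneg.2 hJ')
  · have hK' := hK.le_of_abs_le hKm (sub_ne_zero.2 (Ne.symm hy₂)) (v := x₁ - y)
      (sq_le_sq.1 (by nlinarith))
    have hJ' := hJ.le_of_abs_le hJm (sub_ne_zero.2 (Ne.symm hys)) (v := y)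
      (sq_le_sq.1 (by nlinarith))
    exact mul_nonneg_of_nonpos_of_nonpos (sub_nonpos.2 hK') (sub_nonpos.2 hJ')

lemma convolve_antitoneOn (hKi : Integrable K) (hJi : Integrable J)
    (hK₀ : ∀ x, 0 ≤ K x) (hJ₀ : ∀ x, 0 ≤ J x) (hK : K.Even) (hJ : J.Even)
    (hKm : AntitoneOn K (Ioi 0)) (hJm : AntitoneOn J (Ioi 0)) :
    AntitoneOn (convolve K J) (Ioi 0) := by
  intro x₁ hx₁ x₂ hx₂ hx
  have hint {x : ℝ} (hx : x ∈ Ioi 0) := integrable_mul_comp_sub_of_even_antitoneOn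
    hKi hJi hK₀ hJ₀ hK hJ hKm hJm hx.ne'
  have hrefl {a b y : ℝ} (hab : a + b = x₁ + x₂) :
      K (a - (x₁ + x₂ - y)) = K (b - y) := by
    rw [show a - (x₁ + x₂ - y) = -(b - y) by linarith, hK]
  refine integral_mono_of_add_comp_sub_left_le (hint hx₂) (hint hx₁) (x₁ + x₂) ?_
  -- monotonicity says nothing about `K 0` and `J 0`, which enter only at these four points
  have hfin : ({0, x₁, x₂, x₁ + x₂} : Set ℝ).Finite := toFinite _
  filter_upwards [measure_eq_zero_iff_ae_notMem.1 (hfin.measure_zero volume)] with y hy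
  rw [hrefl (add_comm x₂ x₁), hrefl rfl]
  exact mul_add_mul_le_of_even_antitoneOn hK hJ hKm hJm hx₁ hx hy

end Convolution

/-- If `K, J ∈ L¹(ℝ)` are nonnegative even functions, nonincreasing on
`(0,∞)`, then `K * J` is a.e. equal to an even function nonincreasing on `(0,∞)`. -/
theorem stmt3 (K J : ℝ → ℝ)
    (hKint : Integrable K) (hJint : Integrable J)
    (hKpos : ∀ x, 0 ≤ K x) (hJpos : ∀ x, 0 ≤ J x)
    (hKeven : ∀ x, K (-x) = K x) (hJeven : ∀ x, J (-x) = J x)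
    (hKmono : AntitoneOn K (Set.Ioi 0)) (hJmono : AntitoneOn J (Set.Ioi 0)) :
    ∃ H : ℝ → ℝ, (∀ x, H (-x) = H x) ∧ AntitoneOn H (Set.Ioi 0) ∧
      (fun x => ∫ y, K (x - y) * J y) =ᵐ[volume] H :=
  ⟨convolve K J, convolve_neg hKeven hJeven,
    convolve_antitoneOn hKint hJint hKpos hJpos hKeven hJeven hKmono hJmono, EventuallyEq.rfl⟩
end

section
/- Let K, J ∈ L¹(ℝᴺ) be nonnegative radially symmetric functions whose radial profiles are nonincreasing. Then K * J is radially symmetric with nonincreasing radial profile. -/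
/-!
By rotation invariance it suffices to look at the points `s • e₀` of the first axis. Splitting
`y = (u, z)` off its first coordinate, Fubini leaves, for each `z`, a one-dimensional convolution
of the even functions `w ↦ Φ √(w² + |z|²)` and `w ↦ Ψ √(w² + |z|²)`, nonincreasing on `[0, ∞)`.
For `0 ≤ s ≤ t`, centring at `(s + t) / 2` and folding `w ↔ -w` turns the comparison of the two
convolutions into the binary rearrangement inequality, pointwise in `w > 0`, because
`f (d + w) ≤ f (d - w)` for `d, w ≥ 0`. Lower Lebesgue integrals avoid integrability side
conditions; the convolution is finite since `K ≤ φK 0` and `J` is integrable.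
-/

open MeasureTheory Real Set
open scoped ENNReal

lemma mul_add_mul_le_mul_add_mul_of_canonicallyOrdered {R : Type*} [CommSemiring R] [PartialOrder R]
    [CanonicallyOrderedAdd R] [IsOrderedRing R] {a b c d : R} (hab : a ≤ b) (hcd : c ≤ d) :
    a * d + b * c ≤ a * c + b * d := by
  obtain ⟨e, rfl⟩ := exists_add_of_le hcd
  calc a * (c + e) + b * c = a * c + b * c + a * e := by ring
    _ ≤ a * c + b * c + b * e := by gcongr
    _ = a * c + b * (c + e) := by ring

lemma AntitoneOn.measurable_comp_of_nonneg {α β : Type*} [MeasurableSpace α] [MeasurableSpace β]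
    [TopologicalSpace β] [BorelSpace β] [LinearOrder β] [OrderTopology β]
    [SecondCountableTopology β]
    {φ : ℝ → β} (hφ : AntitoneOn φ (Ici 0)) {g : α → ℝ} (hg : Measurable g) (hg0 : ∀ x, 0 ≤ g x) :
    Measurable fun x => φ (g x) := by
  have hmax : Antitone fun r => φ (max r 0) := fun a b hab =>
    hφ (le_max_right a 0) (le_max_right b 0) (max_le_max_right 0 hab)
  simpa only [Function.comp_def, max_eq_left (hg0 _)] using hmax.measurable.comp hg

lemma Function.Even.apply_abs {β : Type*} {f : ℝ → β} (hf : f.Even) (x : ℝ) : f |x| = f x := by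
  rcases abs_choice x with h | h <;> rw [h]
  exact hf x

lemma Function.Even.measurable_of_antitoneOn {f : ℝ → ℝ≥0∞} (he : f.Even)
    (ha : AntitoneOn f (Ici 0)) : Measurable f := by
  simpa only [he.apply_abs] using ha.measurable_comp_of_nonneg continuous_abs.measurable abs_nonneg

lemma Function.Even.apply_add_le_apply_sub {β : Type*} [Preorder β] {f : ℝ → β} (he : f.Even)
    (ha : AntitoneOn f (Ici 0)) {r w : ℝ} (hr : 0 ≤ r) (hw : 0 ≤ w) : f (r + w) ≤ f (r - w) := by
  rw [← he.apply_abs (r - w)]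
  exact ha (mem_Ici.2 (abs_nonneg _)) (mem_Ici.2 (by positivity))
    (abs_sub_le_iff.2 ⟨by linarith, by linarith⟩)

lemma lintegral_eq_setLIntegral_Ioi_add_comp_neg {h : ℝ → ℝ≥0∞} (hh : Measurable h) :
    ∫⁻ w, h w = ∫⁻ w in Ioi 0, (h w + h (-w)) := by
  have hneg : ∫⁻ w in Ioi 0, h (-w) = ∫⁻ w in Iic 0, h w := by
    rw [← setLIntegral_congr Iio_ae_eq_Iic]
    simpa [image_neg_eq_neg, neg_Ioi] using
      (Measure.measurePreserving_neg volume).setLIntegral_comp_emb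
        (MeasurableEquiv.neg ℝ).measurableEmbedding h (Ioi 0)
  rw [lintegral_add_left hh, hneg, ← compl_Ioi, lintegral_add_compl h measurableSet_Ioi]

theorem antitoneOn_lintegral_sub_mul_of_even {f g : ℝ → ℝ≥0∞} (hfe : f.Even) (hge : g.Even)
    (hf : AntitoneOn f (Ici 0)) (hg : AntitoneOn g (Ici 0)) :
    AntitoneOn (fun s => ∫⁻ u, f (s - u) * g u) (Ici 0) := by
  intro s hs t ht hst
  have hfm := hfe.measurable_of_antitoneOn hf
  have hgm := hge.measurable_of_antitoneOn hg
  set m := (s + t) / 2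
  set d := (t - s) / 2
  have hm : 0 ≤ m := by simp only [mem_Ici] at hs ht; positivity
  have hd : 0 ≤ d := by simp only [d]; linarith
  -- centre at the midpoint `m`: then `t - u = d - w` and `s - u = -(d + w)` for `u = m + w`
  have hshift : ∀ r : ℝ, ∫⁻ u, f (r - u) * g u = ∫⁻ w, f (r - m - w) * g (m + w) := fun r => by
    rw [← lintegral_add_left_eq_self _ m]
    simp only [sub_sub]
  have ht' : t - m = d := by simp only [m, d]; ring
  have hs' : ∀ w, f (s - m - w) = f (d + w) := fun w => by
    rw [← hfe]; congr 1; simp only [m, d]; ring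
  simp only [hshift t, hshift s, ht', hs']
  rw [lintegral_eq_setLIntegral_Ioi_add_comp_neg (by fun_prop),
    lintegral_eq_setLIntegral_Ioi_add_comp_neg (by fun_prop)]
  refine setLIntegral_mono (by fun_prop) fun w hw => ?_
  simp only [sub_neg_eq_add, ← sub_eq_add_neg]
  rw [add_comm (f (d - w) * _)]
  exact mul_add_mul_le_mul_add_mul_of_canonicallyOrdered
    (hfe.apply_add_le_apply_sub hf hd hw.le) (hge.apply_add_le_apply_sub hg hm hw.le)

noncomputable def euclideanSpaceConsEquiv (n : ℕ) :
    (ℝ × (Fin n → ℝ)) ≃ᵐ EuclideanSpace ℝ (Fin (n + 1)) :=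
  (MeasurableEquiv.piFinSuccAbove (fun _ => ℝ) 0).symm.trans (MeasurableEquiv.toLp 2 _)

lemma measurePreserving_euclideanSpaceConsEquiv (n : ℕ) :
    MeasurePreserving (euclideanSpaceConsEquiv n) := by
  have hcons : MeasurePreserving (MeasurableEquiv.piFinSuccAbove (fun _ : Fin (n + 1) => ℝ) 0).symm
      (volume.prod volume) volume :=
    (volume_preserving_piFinSuccAbove (fun _ : Fin (n + 1) => ℝ) 0).symm
  exact (EuclideanSpace.volume_preserving_symm_measurableEquiv_toLp (Fin (n + 1))).symm.comp hcons

@[simp]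
lemma euclideanSpaceConsEquiv_apply_zero (n : ℕ) (u : ℝ) (z : Fin n → ℝ) :
    euclideanSpaceConsEquiv n (u, z) 0 = u := by
  simp [euclideanSpaceConsEquiv, MeasurableEquiv.piFinSuccAbove]

@[simp]
lemma euclideanSpaceConsEquiv_apply_succ (n : ℕ) (u : ℝ) (z : Fin n → ℝ) (j : Fin n) :
    euclideanSpaceConsEquiv n (u, z) j.succ = z j := by
  simp [euclideanSpaceConsEquiv, MeasurableEquiv.piFinSuccAbove]

lemma norm_euclideanSpaceConsEquiv (n : ℕ) (u : ℝ) (z : Fin n → ℝ) :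
    ‖euclideanSpaceConsEquiv n (u, z)‖ = √(u ^ 2 + ∑ j, z j ^ 2) := by
  simp [EuclideanSpace.norm_eq, Fin.sum_univ_succ]

lemma smul_single_zero_sub_euclideanSpaceConsEquiv (n : ℕ) (s u : ℝ) (z : Fin n → ℝ) :
    s • EuclideanSpace.single 0 1 - euclideanSpaceConsEquiv n (u, z) =
      euclideanSpaceConsEquiv n (s - u, -z) := by
  ext j
  cases j using Fin.cases <;> simp [Fin.succ_ne_zero]

lemma lintegral_euclideanSpace_succ {n : ℕ} {G : EuclideanSpace ℝ (Fin (n + 1)) → ℝ≥0∞}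
    (hG : Measurable G) :
    ∫⁻ y, G y = ∫⁻ z : Fin n → ℝ, ∫⁻ u : ℝ, G (euclideanSpaceConsEquiv n (u, z)) := by
  rw [← (measurePreserving_euclideanSpaceConsEquiv n).lintegral_comp_emb
    (euclideanSpaceConsEquiv n).measurableEmbedding, Measure.volume_eq_prod,
    lintegral_prod_symm (fun p => G (euclideanSpaceConsEquiv n p))
      (hG.comp (euclideanSpaceConsEquiv n).measurable).aemeasurable]

lemma AntitoneOn.even_and_antitoneOn_comp_sqrt_sq_add {F : ℝ → ℝ≥0∞} (hF : AntitoneOn F (Ici 0))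
    (a : ℝ) :
    (fun w => F √(w ^ 2 + a)).Even ∧ AntitoneOn (fun w => F √(w ^ 2 + a)) (Ici 0) :=
  ⟨fun w => by simp only [neg_sq], fun u hu v hv huv =>
    hF (sqrt_nonneg _) (sqrt_nonneg _) (sqrt_le_sqrt (by gcongr))⟩

theorem antitoneOn_lintegral_smul_single_sub {n : ℕ} {Φ Ψ : ℝ → ℝ≥0∞}
    (hΦ : AntitoneOn Φ (Ici 0)) (hΨ : AntitoneOn Ψ (Ici 0)) :
    AntitoneOn (fun s : ℝ => ∫⁻ y : EuclideanSpace ℝ (Fin (n + 1)),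
      Φ ‖s • EuclideanSpace.single 0 (1 : ℝ) - y‖ * Ψ ‖y‖) (Ici 0) := by
  intro s hs t ht hst
  have hmeas : ∀ r : ℝ, Measurable fun y : EuclideanSpace ℝ (Fin (n + 1)) =>
      Φ ‖r • EuclideanSpace.single 0 (1 : ℝ) - y‖ * Ψ ‖y‖ := fun r =>
    (hΦ.measurable_comp_of_nonneg (by fun_prop) fun _ => norm_nonneg _).mul
      (hΨ.measurable_comp_of_nonneg measurable_norm norm_nonneg)
  simp only [lintegral_euclideanSpace_succ (hmeas _), smul_single_zero_sub_euclideanSpaceConsEquiv,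
    norm_euclideanSpaceConsEquiv, Pi.neg_apply, neg_sq]
  refine lintegral_mono fun z => ?_
  obtain ⟨hfe, hf⟩ := hΦ.even_and_antitoneOn_comp_sqrt_sq_add (∑ j, z j ^ 2)
  obtain ⟨hge, hg⟩ := hΨ.even_and_antitoneOn_comp_sqrt_sq_add (∑ j, z j ^ 2)
  exact antitoneOn_lintegral_sub_mul_of_even hfe hge hf hg hs ht hst

lemma lintegral_comp_norm_sub_eq_of_norm_eq {E : Type*} [NormedAddCommGroup E]
    [InnerProductSpace ℝ E] [FiniteDimensional ℝ E] [MeasurableSpace E] [BorelSpace E]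
    (F : ℝ → ℝ → ℝ≥0∞) {x x' : E} (h : ‖x‖ = ‖x'‖) :
    ∫⁻ y, F ‖x - y‖ ‖y‖ = ∫⁻ y, F ‖x' - y‖ ‖y‖ := by
  -- the reflection in the hyperplane orthogonal to `x' - x` swaps `x` and `x'`
  let e := Submodule.reflection (ℝ ∙ (x' - x))ᗮ
  have hex : e x' = x := Submodule.reflection_sub h.symm
  rw [← e.measurePreserving.lintegral_comp_emb e.toHomeomorph.measurableEmbedding]
  refine lintegral_congr fun y => ?_
  rw [← hex, ← map_sub, e.norm_map, e.norm_map]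

theorem exists_antitoneOn_lintegral_norm_sub_mul {N : ℕ} {Φ Ψ : ℝ → ℝ≥0∞}
    (hΦ : AntitoneOn Φ (Ici 0)) (hΨ : AntitoneOn Ψ (Ici 0)) :
    ∃ φ : ℝ → ℝ≥0∞, AntitoneOn φ (Ici 0) ∧
      ∀ x : EuclideanSpace ℝ (Fin N), ∫⁻ y, Φ ‖x - y‖ * Ψ ‖y‖ = φ ‖x‖ := by
  cases N with
  | zero =>
    refine ⟨fun _ => ∫⁻ y : EuclideanSpace ℝ (Fin 0), Φ ‖0 - y‖ * Ψ ‖y‖, antitoneOn_const,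
      fun x => ?_⟩
    rw [Subsingleton.elim x 0]
  | succ n =>
    refine ⟨_, antitoneOn_lintegral_smul_single_sub (n := n) hΦ hΨ, fun x => ?_⟩
    refine lintegral_comp_norm_sub_eq_of_norm_eq (fun a b => Φ a * Ψ b) ?_
    rw [norm_smul, PiLp.norm_single, norm_one, mul_one, norm_norm]

theorem stmt4_general {N : ℕ} (K J : EuclideanSpace ℝ (Fin N) → ℝ)
    (hJint : Integrable J)
    (φK φJ : ℝ → ℝ)
    (hφK : ∀ x, K x = φK ‖x‖) (hφJ : ∀ x, J x = φJ ‖x‖)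
    (hφKpos : ∀ r ∈ Set.Ici (0:ℝ), 0 ≤ φK r) (hφJpos : ∀ r ∈ Set.Ici (0:ℝ), 0 ≤ φJ r)
    (hφKmono : AntitoneOn φK (Set.Ici 0)) (hφJmono : AntitoneOn φJ (Set.Ici 0)) :
    ∃ φ : ℝ → ℝ, AntitoneOn φ (Set.Ici 0) ∧
      ∀ x, (∫ y, K (x - y) * J y) = φ ‖x‖ := by
  obtain ⟨φ, hφ, hconv⟩ := exists_antitoneOn_lintegral_norm_sub_mul (N := N)
    (fun _ ha _ hb hab => ENNReal.ofReal_le_ofReal (hφKmono ha hb hab))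
    (fun _ ha _ hb hab => ENNReal.ofReal_le_ofReal (hφJmono ha hb hab))
  have hK0 : ∀ x, 0 ≤ K x := fun x => hφK x ▸ hφKpos _ (norm_nonneg x)
  have hJ0 : ∀ x, 0 ≤ J x := fun x => hφJ x ▸ hφJpos _ (norm_nonneg x)
  have hKm : Measurable K := by
    rw [funext hφK]
    exact hφKmono.measurable_comp_of_nonneg measurable_norm norm_nonneg
  have hφ0 : φ 0 ≠ ⊤ := by
    have hbound : φ 0 ≤ ENNReal.ofReal (φK 0) * ∫⁻ y, ENNReal.ofReal (J y) := by
      rw [← lintegral_const_mul' _ _ ENNReal.ofReal_ne_top,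
        ← norm_zero (E := EuclideanSpace ℝ (Fin N)), ← hconv]
      refine lintegral_mono fun y => ?_
      rw [hφJ]
      gcongr
      exact hφKmono (norm_nonneg _) (norm_nonneg _) (by simp)
    exact ne_top_of_le_ne_top (ENNReal.mul_ne_top ENNReal.ofReal_ne_top hJint.lintegral_lt_top.ne)
      hbound
  refine ⟨fun r => (φ r).toReal, fun a ha b hb hab => ENNReal.toReal_mono
    (ne_top_of_le_ne_top hφ0 (hφ self_mem_Ici ha ha)) (hφ ha hb hab), fun x => ?_⟩
  rw [integral_eq_lintegral_of_nonneg_ae (f := fun y => K (x - y) * J y)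
    (ae_of_all _ fun y => mul_nonneg (hK0 _) (hJ0 _))
    ((hKm.comp (measurable_const.sub measurable_id)).aestronglyMeasurable.mul hJint.1)]
  simp only [hφK, hφJ, ENNReal.ofReal_mul (hφKpos _ (norm_nonneg _)), hconv]

/-- If `K, J ∈ L¹(ℝᴺ)` are nonnegative radially symmetric functions with
nonincreasing radial profiles, then `K * J` is radially symmetric with a nonincreasing
radial profile. -/
theorem stmt4 {N : ℕ} (K J : EuclideanSpace ℝ (Fin N) → ℝ)
    (hKint : Integrable K) (hJint : Integrable J)
    (φK φJ : ℝ → ℝ)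
    (hφK : ∀ x, K x = φK ‖x‖) (hφJ : ∀ x, J x = φJ ‖x‖)
    (hφKpos : ∀ r ∈ Set.Ici (0:ℝ), 0 ≤ φK r) (hφJpos : ∀ r ∈ Set.Ici (0:ℝ), 0 ≤ φJ r)
    (hφKmono : AntitoneOn φK (Set.Ici 0)) (hφJmono : AntitoneOn φJ (Set.Ici 0)) :
    ∃ φ : ℝ → ℝ, AntitoneOn φ (Set.Ici 0) ∧
      ∀ x, (∫ y, K (x - y) * J y) = φ ‖x‖ :=
  stmt4_general K J hJint φK φJ hφK hφJ hφKpos hφJpos hφKmono hφJmono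
end

section
/- Under the same hypotheses (v₀ ∈ L¹(ℝᴺ) odd in x_N, nonnegative for x_N > 0, with first moment m₁ = ∫_{x_N>0} x_N v₀ dx < ∞), the imaginary part satisfies Im(v̂₀(ξ)) = −ξ_N (2m₁ + o(1)) as ξ → 0, and hence |v̂₀(ξ)| = |ξ_N|(2m₁ + o(1)) as ξ → 0. -/
open MeasureTheory Real Set Filter Asymptotics
open scoped RealInnerProductSpace


section aux

lemma aux_one_sub_cos (s : ℝ) : |Real.cos s - 1| ≤ min 2 |s| := by
  have h1 : Real.cos s ≤ 1 := Real.cos_le_one s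
  have h2 : -1 ≤ Real.cos s := Real.neg_one_le_cos s
  rw [abs_sub_comm, abs_of_nonneg (by linarith)]
  refine le_min (by linarith) ?_
  have hh : Real.sin (s/2) ^ 2 = 1/2 - Real.cos s / 2 := by
    have := Real.sin_sq_eq_half_sub (s/2)
    rw [show 2 * (s/2) = s by ring] at this
    linarith [this]
  have he : 1 - Real.cos s = 2 * Real.sin (s/2)^2 := by linarith
  rw [he]
  have hb : Real.sin (s/2)^2 ≤ |s/2| := by
    calc Real.sin (s/2)^2 = |Real.sin (s/2)| * |Real.sin (s/2)| := by
          rw [← abs_mul, ← sq, abs_of_nonneg (sq_nonneg _)]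
      _ ≤ 1 * |s/2| :=
          mul_le_mul (Real.abs_sin_le_one _) (Real.abs_sin_le_abs) (abs_nonneg _) zero_le_one
      _ = |s/2| := one_mul _
  calc 2 * Real.sin (s/2)^2 ≤ 2 * |s/2| := by linarith
    _ = |s| := by rw [abs_div, abs_two]; ring

lemma aux_sin_sub (t : ℝ) : |Real.sin t - t| ≤ |t| * min 2 |t| := by
  have key : ∀ u : ℝ, 0 ≤ u → |Real.sin u - u| ≤ |u| * min 2 |u| := by
    intro u hu
    rw [abs_of_nonneg hu]
    have hle : Real.sin u ≤ u := Real.sin_le hu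
    rw [abs_sub_comm, abs_of_nonneg (by linarith)]
    rcases le_or_gt u 1 with h1 | h1
    · have hm : min 2 u = u := min_eq_right (by linarith)
      rw [hm]
      rcases eq_or_lt_of_le hu with rfl | hu'
      · simp
      · have := Real.sin_gt_sub_cube hu'
        nlinarith
    · rcases le_or_gt u 2 with h2 | h2
      · have hs : 0 ≤ Real.sin u := by
          apply Real.sin_nonneg_of_nonneg_of_le_pi hu
          linarith [Real.pi_gt_three]
        have hm : (1:ℝ) ≤ min 2 u := le_min (by norm_num) (by linarith)
        calc u - Real.sin u ≤ u := by linarith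
          _ = u * 1 := (mul_one u).symm
          _ ≤ u * min 2 u := mul_le_mul_of_nonneg_left hm hu
      · have hm : min 2 u = 2 := min_eq_left (by linarith)
        rw [hm]
        have := Real.neg_one_le_sin u
        nlinarith
  rcases le_or_gt 0 t with h | h
  · exact key t h
  · have h2 := key (-t) (by linarith)
    rw [Real.sin_neg, abs_neg] at h2
    have he : |Real.sin t - t| = |-Real.sin t - -t| := by
      rw [show -Real.sin t - -t = -(Real.sin t - t) by ring, abs_neg]
    rw [he]; exact h2

lemma aux_abs_sin (s : ℝ) : |Real.sin s| ≤ min 2 |s| :=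
  le_min (le_trans (Real.abs_sin_le_one s) one_le_two) Real.abs_sin_le_abs

lemma aux_min2 {u : ℝ} (hu : 0 ≤ u) : min 2 (2*u) ≤ 2 * min 2 u := by
  rcases le_total u 1 with h | h
  · have : min 2 u = u := min_eq_right (by linarith)
    rw [this]
    exact min_le_right _ _
  · have : (1:ℝ) ≤ min 2 u := le_min (by norm_num) h
    calc min 2 (2*u) ≤ 2 := min_le_left _ _
      _ ≤ 2 * min 2 u := by linarith

variable {N : ℕ}

noncomputable def auxR (N : ℕ) : EuclideanSpace ℝ (Fin (N+1)) ≃ₗᵢ[ℝ] EuclideanSpace ℝ (Fin (N+1)) :=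
  LinearIsometryEquiv.piLpCongrRight 2
    (fun i => if i = Fin.last N then LinearIsometryEquiv.neg ℝ else LinearIsometryEquiv.refl ℝ ℝ)

lemma auxR_apply (x : EuclideanSpace ℝ (Fin (N+1))) :
    auxR N x = Function.update x (Fin.last N) (-(x (Fin.last N))) := by
  funext i
  rw [auxR, LinearIsometryEquiv.piLpCongrRight_apply]
  by_cases h : i = Fin.last N
  · subst h; simp [Function.update_self]
  · simp [h, Function.update_of_ne h]

lemma auxR_mp : MeasurePreserving (auxR N) (volume) (volume) :=
  (auxR N).measurePreserving

lemma auxR_last (x : EuclideanSpace ℝ (Fin (N+1))) :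
    (auxR N x) (Fin.last N) = -(x (Fin.last N)) := by
  rw [auxR_apply]; simp

lemma auxR_inner (x ξ : EuclideanSpace ℝ (Fin (N+1))) :
    ⟪auxR N x, ξ⟫ = ⟪x, ξ⟫ - 2 * (x (Fin.last N) * ξ (Fin.last N)) := by
  have hx : auxR N x = x - (2 * x (Fin.last N)) • EuclideanSpace.single (Fin.last N) (1:ℝ) := by
    ext i
    rw [auxR_apply]
    by_cases h : i = Fin.last N
    · subst h
      simp [Function.update_self, EuclideanSpace.single_apply]
      ring
    · simp [Function.update_of_ne h, EuclideanSpace.single_apply, h]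
  rw [hx, inner_sub_left, inner_smul_left]
  simp [EuclideanSpace.inner_single_left]
  ring

lemma aux_odd_zero (F : EuclideanSpace ℝ (Fin (N+1)) → ℝ)
    (h : ∀ x, F (auxR N x) = - F x) : ∫ x, F x = 0 := by
  have h1 : ∫ x, F (auxR N x) = ∫ x, F x :=
    auxR_mp.integral_comp (auxR N).toHomeomorph.toMeasurableEquiv.measurableEmbedding F
  have h2 : ∫ x, F (auxR N x) = - ∫ x, F x := by
    simp_rw [h]
    exact integral_neg F
  linarith

lemma aux_null : volume {x : EuclideanSpace ℝ (Fin (N+1)) | x (Fin.last N) = 0} = 0 := by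
  have h0 : {x : EuclideanSpace ℝ (Fin (N+1)) | x (Fin.last N) = 0}
      = (LinearMap.ker (EuclideanSpace.projₗ (𝕜 := ℝ) (Fin.last N)) : Set _) := by
    ext x; simp [LinearMap.mem_ker]
  rw [h0]
  apply MeasureTheory.Measure.addHaar_submodule
  intro h
  have h1 : EuclideanSpace.single (Fin.last N) (1:ℝ) ∈
      LinearMap.ker (EuclideanSpace.projₗ (𝕜 := ℝ) (Fin.last N)) := h ▸ Submodule.mem_top
  rw [LinearMap.mem_ker] at h1
  simp [EuclideanSpace.projₗ] at h1

lemma aux_meas_last : Measurable (fun x : EuclideanSpace ℝ (Fin (N+1)) => x (Fin.last N)) :=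
  (EuclideanSpace.proj (𝕜 := ℝ) (Fin.last N)).continuous.measurable

lemma aux_coord_le (x : EuclideanSpace ℝ (Fin (N+1))) : |x (Fin.last N)| ≤ ‖x‖ := by
  have h := abs_real_inner_le_norm (EuclideanSpace.single (Fin.last N) (1:ℝ)) x
  rw [EuclideanSpace.inner_single_left] at h
  simpa [EuclideanSpace.norm_single] using h

lemma aux_moment (v₀ : EuclideanSpace ℝ (Fin (N+1)) → ℝ)
    (hodd : ∀ x : EuclideanSpace ℝ (Fin (N+1)),
      v₀ (WithLp.toLp 2 (Function.update x (Fin.last N) (-(x (Fin.last N))))) = - v₀ x)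
    (hm₁ : Integrable (fun x : EuclideanSpace ℝ (Fin (N+1)) => x (Fin.last N) * v₀ x)) :
    ∫ x, x (Fin.last N) * v₀ x
      = 2 * ∫ x in {x : EuclideanSpace ℝ (Fin (N+1)) | 0 < x (Fin.last N)},
          x (Fin.last N) * v₀ x := by
  set F := fun x : EuclideanSpace ℝ (Fin (N+1)) => x (Fin.last N) * v₀ x with hF
  have heven : ∀ x, F (auxR N x) = F x := by
    intro x
    have hv : v₀ (auxR N x) = - v₀ x := by rw [← hodd x]; exact congrArg v₀ (WithLp.ofLp_injective 2 (auxR_apply x))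
    simp only [hF, auxR_last, hv]
    ring
  have hP : MeasurableSet {x : EuclideanSpace ℝ (Fin (N+1)) | 0 < x (Fin.last N)} :=
    measurableSet_lt measurable_const aux_meas_last
  have hsplit := integral_add_compl hP hm₁
  have hae : {x : EuclideanSpace ℝ (Fin (N+1)) | 0 < x (Fin.last N)}ᶜ
      =ᵐ[volume] {x : EuclideanSpace ℝ (Fin (N+1)) | x (Fin.last N) < 0} := by
    refine MeasureTheory.ae_eq_set.2 ?_
    constructor
    · apply measure_mono_null _ aux_null
      rintro x ⟨hx1, hx2⟩
      have h1' : ¬ 0 < x (Fin.last N) := hx1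
      have h2' : ¬ x (Fin.last N) < 0 := hx2
      show x (Fin.last N) = 0
      exact le_antisymm (not_lt.1 h1') (not_lt.1 h2')
    · apply measure_mono_null _ aux_null
      rintro x ⟨hx1, hx2⟩
      have h1' : x (Fin.last N) < 0 := hx1
      have h2' : 0 < x (Fin.last N) := of_not_not hx2
      show x (Fin.last N) = 0
      linarith
  have h1 : ∫ x in {x : EuclideanSpace ℝ (Fin (N+1)) | 0 < x (Fin.last N)}ᶜ, F x
      = ∫ x in {x : EuclideanSpace ℝ (Fin (N+1)) | x (Fin.last N) < 0}, F x :=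
    setIntegral_congr_set hae
  have h2 : ∫ x in {x : EuclideanSpace ℝ (Fin (N+1)) | x (Fin.last N) < 0}, F x
      = ∫ x in {x : EuclideanSpace ℝ (Fin (N+1)) | 0 < x (Fin.last N)}, F x := by
    have hpre : (auxR N) ⁻¹' {x : EuclideanSpace ℝ (Fin (N+1)) | 0 < x (Fin.last N)}
        = {x : EuclideanSpace ℝ (Fin (N+1)) | x (Fin.last N) < 0} := by
      ext x
      simp [auxR_last, neg_pos]
    have hkey := auxR_mp.setIntegral_preimage_emb
      (auxR N).toHomeomorph.toMeasurableEquiv.measurableEmbedding F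
      {x : EuclideanSpace ℝ (Fin (N+1)) | 0 < x (Fin.last N)}
    rw [hpre] at hkey
    simp_rw [heven] at hkey
    exact hkey
  linarith [hsplit, h1, h2]

end aux

open scoped Topology
section core
variable {N : ℕ}

noncomputable def auxD (N : ℕ) (v₀ : EuclideanSpace ℝ (Fin (N+1)) → ℝ)
    (ξ : EuclideanSpace ℝ (Fin (N+1))) : ℝ :=
  ∫ x : EuclideanSpace ℝ (Fin (N+1)), |x (Fin.last N) * v₀ x| * min 2 (‖x‖ * ‖ξ‖)

lemma auxD_int (v₀ : EuclideanSpace ℝ (Fin (N+1)) → ℝ)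
    (hm₁ : Integrable (fun x : EuclideanSpace ℝ (Fin (N+1)) => x (Fin.last N) * v₀ x))
    (ξ : EuclideanSpace ℝ (Fin (N+1))) :
    Integrable (fun x : EuclideanSpace ℝ (Fin (N+1)) =>
      |x (Fin.last N) * v₀ x| * min 2 (‖x‖ * ‖ξ‖)) := by
  have hmin : ∀ x : EuclideanSpace ℝ (Fin (N+1)), ‖min 2 (‖x‖ * ‖ξ‖)‖ ≤ 2 := by
    intro x
    rw [Real.norm_eq_abs, abs_le]
    constructor
    · have : (0:ℝ) ≤ min 2 (‖x‖ * ‖ξ‖) :=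
        le_min (by norm_num) (mul_nonneg (norm_nonneg _) (norm_nonneg _))
      linarith
    · exact min_le_left _ _
  have := Integrable.bdd_mul hm₁.abs
    ((continuous_const.min ((continuous_norm).mul continuous_const)).aestronglyMeasurable)
    (Filter.Eventually.of_forall hmin)
  simpa [mul_comm] using this

lemma auxD_tendsto (v₀ : EuclideanSpace ℝ (Fin (N+1)) → ℝ)
    (hm₁ : Integrable (fun x : EuclideanSpace ℝ (Fin (N+1)) => x (Fin.last N) * v₀ x)) :
    Tendsto (auxD N v₀) (𝓝 0) (𝓝 0) := by
  have h := MeasureTheory.tendsto_integral_filter_of_dominated_convergence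
    (μ := (volume : Measure (EuclideanSpace ℝ (Fin (N+1)))))
    (l := (𝓝 (0 : EuclideanSpace ℝ (Fin (N+1)))))
    (F := fun ξ x => |x (Fin.last N) * v₀ x| * min 2 (‖x‖ * ‖ξ‖))
    (f := fun _ => (0:ℝ))
    (bound := fun x => |x (Fin.last N) * v₀ x| * 2)
    (Filter.Eventually.of_forall fun ξ => (auxD_int v₀ hm₁ ξ).aestronglyMeasurable)
    (Filter.Eventually.of_forall fun ξ => Filter.Eventually.of_forall fun x => by
      have h0 : (0:ℝ) ≤ min 2 (‖x‖ * ‖ξ‖) :=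
        le_min (by norm_num) (mul_nonneg (norm_nonneg _) (norm_nonneg _))
      rw [Real.norm_eq_abs, abs_mul, abs_abs, abs_of_nonneg h0]
      exact mul_le_mul_of_nonneg_left (min_le_left _ _) (abs_nonneg _))
    (hm₁.abs.mul_const 2)
    (Filter.Eventually.of_forall fun x => by
      have hc : Continuous fun ξ : EuclideanSpace ℝ (Fin (N+1)) =>
          |x (Fin.last N) * v₀ x| * min 2 (‖x‖ * ‖ξ‖) :=
        continuous_const.mul (continuous_const.min (continuous_const.mul continuous_norm))
      have := hc.tendsto 0
      simpa using this)
  simp only [integral_zero] at h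
  exact h

lemma aux_pt_bound (x ξ : EuclideanSpace ℝ (Fin (N+1))) :
    |Real.cos (⟪x, ξ⟫ - x (Fin.last N) * ξ (Fin.last N))
        * Real.sin (x (Fin.last N) * ξ (Fin.last N))
        - x (Fin.last N) * ξ (Fin.last N)|
      ≤ 3 * |x (Fin.last N) * ξ (Fin.last N)| * min 2 (‖x‖ * ‖ξ‖) := by
  set T := x (Fin.last N) * ξ (Fin.last N) with hT
  set S := ⟪x, ξ⟫ - T with hS
  have hu0 : (0:ℝ) ≤ ‖x‖ * ‖ξ‖ := mul_nonneg (norm_nonneg _) (norm_nonneg _)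
  have hTu : |T| ≤ ‖x‖ * ‖ξ‖ := by
    rw [hT, abs_mul]
    exact mul_le_mul (aux_coord_le x) (aux_coord_le ξ) (abs_nonneg _) (norm_nonneg _)
  have hSu : |S| ≤ 2 * (‖x‖ * ‖ξ‖) := by
    rw [hS]
    calc |⟪x, ξ⟫ - T| ≤ |⟪x, ξ⟫| + |T| := abs_sub _ _
      _ ≤ ‖x‖ * ‖ξ‖ + (‖x‖ * ‖ξ‖) := add_le_add (abs_real_inner_le_norm x ξ) hTu
      _ = 2 * (‖x‖ * ‖ξ‖) := by ring
  have hmin0 : (0:ℝ) ≤ min 2 (‖x‖ * ‖ξ‖) := le_min (by norm_num) hu0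
  have h1 : |Real.cos S * Real.sin T - T|
      ≤ |Real.cos S - 1| * |Real.sin T| + |Real.sin T - T| := by
    have : Real.cos S * Real.sin T - T
        = (Real.cos S - 1) * Real.sin T + (Real.sin T - T) := by ring
    rw [this]
    calc |(Real.cos S - 1) * Real.sin T + (Real.sin T - T)|
        ≤ |(Real.cos S - 1) * Real.sin T| + |Real.sin T - T| := abs_add_le _ _
      _ = |Real.cos S - 1| * |Real.sin T| + |Real.sin T - T| := by rw [abs_mul]
  have h2 : |Real.cos S - 1| * |Real.sin T| ≤ (2 * min 2 (‖x‖ * ‖ξ‖)) * |T| := by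
    apply mul_le_mul _ Real.abs_sin_le_abs (abs_nonneg _)
      (by positivity)
    calc |Real.cos S - 1| ≤ min 2 |S| := aux_one_sub_cos S
      _ ≤ min 2 (2 * (‖x‖ * ‖ξ‖)) := min_le_min le_rfl hSu
      _ ≤ 2 * min 2 (‖x‖ * ‖ξ‖) := aux_min2 hu0
  have h3 : |Real.sin T - T| ≤ |T| * min 2 (‖x‖ * ‖ξ‖) := by
    calc |Real.sin T - T| ≤ |T| * min 2 |T| := aux_sin_sub T
      _ ≤ |T| * min 2 (‖x‖ * ‖ξ‖) :=
        mul_le_mul_of_nonneg_left (min_le_min le_rfl hTu) (abs_nonneg _)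
  calc |Real.cos S * Real.sin T - T|
      ≤ (2 * min 2 (‖x‖ * ‖ξ‖)) * |T| + |T| * min 2 (‖x‖ * ‖ξ‖) := by
        refine le_trans h1 (add_le_add h2 h3)
    _ = 3 * |T| * min 2 (‖x‖ * ‖ξ‖) := by ring

end core

section core2
open scoped Topology
variable {N : ℕ}

lemma aux_core (v₀ : EuclideanSpace ℝ (Fin (N+1)) → ℝ)
    (hInt : Integrable v₀)
    (hodd : ∀ x : EuclideanSpace ℝ (Fin (N + 1)),
      v₀ (WithLp.toLp 2 (Function.update x (Fin.last N) (-(x (Fin.last N))))) = - v₀ x)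
    (hm₁ : Integrable (fun x : EuclideanSpace ℝ (Fin (N + 1)) => x (Fin.last N) * v₀ x))
    (ξ : EuclideanSpace ℝ (Fin (N+1))) :
    |(∫ x, Real.sin ⟪x, ξ⟫ * v₀ x) - ξ (Fin.last N) * ∫ x, x (Fin.last N) * v₀ x|
      ≤ 3 * |ξ (Fin.last N)| * auxD N v₀ ξ ∧
    |∫ x, Real.cos ⟪x, ξ⟫ * v₀ x| ≤ 2 * |ξ (Fin.last N)| * auxD N v₀ ξ := by
  have hv : ∀ x, v₀ (auxR N x) = - v₀ x := fun x => by rw [← hodd x]; exact congrArg v₀ (WithLp.ofLp_injective 2 (auxR_apply x))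
  have hct : Continuous fun x : EuclideanSpace ℝ (Fin (N+1)) =>
      x (Fin.last N) * ξ (Fin.last N) :=
    ((EuclideanSpace.proj (𝕜 := ℝ) (Fin.last N)).continuous).mul continuous_const
  have hcinner : Continuous fun x : EuclideanSpace ℝ (Fin (N+1)) => ⟪x, ξ⟫ :=
    continuous_id.inner continuous_const
  have hcs : Continuous fun x : EuclideanSpace ℝ (Fin (N+1)) =>
      ⟪x, ξ⟫ - x (Fin.last N) * ξ (Fin.last N) := hcinner.sub hct
  -- integrability of all players
  have I1 : Integrable (fun x : EuclideanSpace ℝ (Fin (N+1)) =>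
      Real.sin (⟪x, ξ⟫ - x (Fin.last N) * ξ (Fin.last N))
        * Real.cos (x (Fin.last N) * ξ (Fin.last N)) * v₀ x) := by
    have := hInt.bdd_mul
      (((Real.continuous_sin.comp hcs).mul (Real.continuous_cos.comp hct)).aestronglyMeasurable)
      (c := 1) (Filter.Eventually.of_forall fun x => by
        rw [Real.norm_eq_abs, Pi.mul_apply, abs_mul]
        exact mul_le_one₀ (Real.abs_sin_le_one _) (abs_nonneg _) (Real.abs_cos_le_one _))
    simpa [mul_assoc] using this
  have I2 : Integrable (fun x : EuclideanSpace ℝ (Fin (N+1)) =>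
      Real.cos (⟪x, ξ⟫ - x (Fin.last N) * ξ (Fin.last N))
        * Real.sin (x (Fin.last N) * ξ (Fin.last N)) * v₀ x) := by
    have := hInt.bdd_mul
      (((Real.continuous_cos.comp hcs).mul (Real.continuous_sin.comp hct)).aestronglyMeasurable)
      (c := 1) (Filter.Eventually.of_forall fun x => by
        rw [Real.norm_eq_abs, Pi.mul_apply, abs_mul]
        exact mul_le_one₀ (Real.abs_cos_le_one _) (abs_nonneg _) (Real.abs_sin_le_one _))
    simpa [mul_assoc] using this
  have I3 : Integrable (fun x : EuclideanSpace ℝ (Fin (N+1)) =>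
      Real.cos (⟪x, ξ⟫ - x (Fin.last N) * ξ (Fin.last N))
        * Real.cos (x (Fin.last N) * ξ (Fin.last N)) * v₀ x) := by
    have := hInt.bdd_mul
      (((Real.continuous_cos.comp hcs).mul (Real.continuous_cos.comp hct)).aestronglyMeasurable)
      (c := 1) (Filter.Eventually.of_forall fun x => by
        rw [Real.norm_eq_abs, Pi.mul_apply, abs_mul]
        exact mul_le_one₀ (Real.abs_cos_le_one _) (abs_nonneg _) (Real.abs_cos_le_one _))
    simpa [mul_assoc] using this
  have I4 : Integrable (fun x : EuclideanSpace ℝ (Fin (N+1)) =>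
      Real.sin (⟪x, ξ⟫ - x (Fin.last N) * ξ (Fin.last N))
        * Real.sin (x (Fin.last N) * ξ (Fin.last N)) * v₀ x) := by
    have := hInt.bdd_mul
      (((Real.continuous_sin.comp hcs).mul (Real.continuous_sin.comp hct)).aestronglyMeasurable)
      (c := 1) (Filter.Eventually.of_forall fun x => by
        rw [Real.norm_eq_abs, Pi.mul_apply, abs_mul]
        exact mul_le_one₀ (Real.abs_sin_le_one _) (abs_nonneg _) (Real.abs_sin_le_one _))
    simpa [mul_assoc] using this
  have I_t : Integrable (fun x : EuclideanSpace ℝ (Fin (N+1)) =>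
      x (Fin.last N) * ξ (Fin.last N) * v₀ x) := by
    have h := hm₁.const_mul (ξ (Fin.last N))
    have he : (fun x : EuclideanSpace ℝ (Fin (N+1)) =>
        ξ (Fin.last N) * (x (Fin.last N) * v₀ x))
        = fun x => x (Fin.last N) * ξ (Fin.last N) * v₀ x := by
      funext x; ring
    rwa [he] at h
  -- identity: moment term as integral
  have hMt : ∫ x, x (Fin.last N) * ξ (Fin.last N) * v₀ x
      = ξ (Fin.last N) * ∫ x, x (Fin.last N) * v₀ x := by
    rw [← integral_const_mul]
    congr 1
    funext x
    ring
  -- sin identity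
  have hzero1 : ∫ x, Real.sin (⟪x, ξ⟫ - x (Fin.last N) * ξ (Fin.last N))
      * Real.cos (x (Fin.last N) * ξ (Fin.last N)) * v₀ x = 0 := by
    apply aux_odd_zero
    intro x
    have e1 : ⟪auxR N x, ξ⟫ - (auxR N x) (Fin.last N) * ξ (Fin.last N)
        = ⟪x, ξ⟫ - x (Fin.last N) * ξ (Fin.last N) := by
      rw [auxR_inner, auxR_last]; ring
    have e2 : (auxR N x) (Fin.last N) * ξ (Fin.last N)
        = -(x (Fin.last N) * ξ (Fin.last N)) := by rw [auxR_last]; ring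
    rw [e1, e2, Real.cos_neg, hv]
    ring
  have hzero2 : ∫ x, Real.cos (⟪x, ξ⟫ - x (Fin.last N) * ξ (Fin.last N))
      * Real.cos (x (Fin.last N) * ξ (Fin.last N)) * v₀ x = 0 := by
    apply aux_odd_zero
    intro x
    have e1 : ⟪auxR N x, ξ⟫ - (auxR N x) (Fin.last N) * ξ (Fin.last N)
        = ⟪x, ξ⟫ - x (Fin.last N) * ξ (Fin.last N) := by
      rw [auxR_inner, auxR_last]; ring
    have e2 : (auxR N x) (Fin.last N) * ξ (Fin.last N)
        = -(x (Fin.last N) * ξ (Fin.last N)) := by rw [auxR_last]; ring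
    rw [e1, e2, Real.cos_neg, hv]
    ring
  have hdecomp_sin : ∀ x : EuclideanSpace ℝ (Fin (N+1)), Real.sin ⟪x, ξ⟫ * v₀ x
      = Real.sin (⟪x, ξ⟫ - x (Fin.last N) * ξ (Fin.last N))
          * Real.cos (x (Fin.last N) * ξ (Fin.last N)) * v₀ x
        + Real.cos (⟪x, ξ⟫ - x (Fin.last N) * ξ (Fin.last N))
          * Real.sin (x (Fin.last N) * ξ (Fin.last N)) * v₀ x := by
    intro x
    have h := Real.sin_add (⟪x, ξ⟫ - x (Fin.last N) * ξ (Fin.last N))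
      (x (Fin.last N) * ξ (Fin.last N))
    rw [sub_add_cancel] at h
    rw [h]
    ring
  have hdecomp_cos : ∀ x : EuclideanSpace ℝ (Fin (N+1)), Real.cos ⟪x, ξ⟫ * v₀ x
      = Real.cos (⟪x, ξ⟫ - x (Fin.last N) * ξ (Fin.last N))
          * Real.cos (x (Fin.last N) * ξ (Fin.last N)) * v₀ x
        - Real.sin (⟪x, ξ⟫ - x (Fin.last N) * ξ (Fin.last N))
          * Real.sin (x (Fin.last N) * ξ (Fin.last N)) * v₀ x := by
    intro x
    have h := Real.cos_add (⟪x, ξ⟫ - x (Fin.last N) * ξ (Fin.last N))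
      (x (Fin.last N) * ξ (Fin.last N))
    rw [sub_add_cancel] at h
    rw [h]
    ring
  have hS : ∫ x, Real.sin ⟪x, ξ⟫ * v₀ x
      = ∫ x, Real.cos (⟪x, ξ⟫ - x (Fin.last N) * ξ (Fin.last N))
          * Real.sin (x (Fin.last N) * ξ (Fin.last N)) * v₀ x := by
    calc ∫ x, Real.sin ⟪x, ξ⟫ * v₀ x
        = ∫ x, (Real.sin (⟪x, ξ⟫ - x (Fin.last N) * ξ (Fin.last N))
            * Real.cos (x (Fin.last N) * ξ (Fin.last N)) * v₀ x
          + Real.cos (⟪x, ξ⟫ - x (Fin.last N) * ξ (Fin.last N))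
            * Real.sin (x (Fin.last N) * ξ (Fin.last N)) * v₀ x) := by
          exact integral_congr_ae (Filter.Eventually.of_forall hdecomp_sin)
      _ = (∫ x, Real.sin (⟪x, ξ⟫ - x (Fin.last N) * ξ (Fin.last N))
            * Real.cos (x (Fin.last N) * ξ (Fin.last N)) * v₀ x)
          + ∫ x, Real.cos (⟪x, ξ⟫ - x (Fin.last N) * ξ (Fin.last N))
            * Real.sin (x (Fin.last N) * ξ (Fin.last N)) * v₀ x := integral_add I1 I2
      _ = _ := by rw [hzero1, zero_add]
  have hC : ∫ x, Real.cos ⟪x, ξ⟫ * v₀ x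
      = - ∫ x, Real.sin (⟪x, ξ⟫ - x (Fin.last N) * ξ (Fin.last N))
          * Real.sin (x (Fin.last N) * ξ (Fin.last N)) * v₀ x := by
    calc ∫ x, Real.cos ⟪x, ξ⟫ * v₀ x
        = ∫ x, (Real.cos (⟪x, ξ⟫ - x (Fin.last N) * ξ (Fin.last N))
            * Real.cos (x (Fin.last N) * ξ (Fin.last N)) * v₀ x
          - Real.sin (⟪x, ξ⟫ - x (Fin.last N) * ξ (Fin.last N))
            * Real.sin (x (Fin.last N) * ξ (Fin.last N)) * v₀ x) := by
          exact integral_congr_ae (Filter.Eventually.of_forall hdecomp_cos)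
      _ = (∫ x, Real.cos (⟪x, ξ⟫ - x (Fin.last N) * ξ (Fin.last N))
            * Real.cos (x (Fin.last N) * ξ (Fin.last N)) * v₀ x)
          - ∫ x, Real.sin (⟪x, ξ⟫ - x (Fin.last N) * ξ (Fin.last N))
            * Real.sin (x (Fin.last N) * ξ (Fin.last N)) * v₀ x := integral_sub I3 I4
      _ = _ := by rw [hzero2, zero_sub]
  constructor
  · -- sin part
    rw [hS, ← hMt, ← integral_sub I2 I_t]
    have hb1 : |∫ x, (Real.cos (⟪x, ξ⟫ - x (Fin.last N) * ξ (Fin.last N))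
          * Real.sin (x (Fin.last N) * ξ (Fin.last N)) * v₀ x
        - x (Fin.last N) * ξ (Fin.last N) * v₀ x)|
        ≤ ∫ x, |Real.cos (⟪x, ξ⟫ - x (Fin.last N) * ξ (Fin.last N))
          * Real.sin (x (Fin.last N) * ξ (Fin.last N)) * v₀ x
        - x (Fin.last N) * ξ (Fin.last N) * v₀ x| := by
      have := norm_integral_le_integral_norm (μ := volume)
        (f := fun x : EuclideanSpace ℝ (Fin (N+1)) =>
          Real.cos (⟪x, ξ⟫ - x (Fin.last N) * ξ (Fin.last N))
            * Real.sin (x (Fin.last N) * ξ (Fin.last N)) * v₀ x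
          - x (Fin.last N) * ξ (Fin.last N) * v₀ x)
      simpa only [Real.norm_eq_abs] using this
    refine le_trans hb1 ?_
    have hmono : ∫ x, |Real.cos (⟪x, ξ⟫ - x (Fin.last N) * ξ (Fin.last N))
          * Real.sin (x (Fin.last N) * ξ (Fin.last N)) * v₀ x
        - x (Fin.last N) * ξ (Fin.last N) * v₀ x|
        ≤ ∫ x, 3 * |ξ (Fin.last N)| * (|x (Fin.last N) * v₀ x| * min 2 (‖x‖ * ‖ξ‖)) := by
      apply integral_mono (I2.sub I_t).abs ((auxD_int v₀ hm₁ ξ).const_mul _)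
      intro x
      have key := aux_pt_bound x ξ
      have hexp : Real.cos (⟪x, ξ⟫ - x (Fin.last N) * ξ (Fin.last N))
            * Real.sin (x (Fin.last N) * ξ (Fin.last N)) * v₀ x
          - x (Fin.last N) * ξ (Fin.last N) * v₀ x
          = (Real.cos (⟪x, ξ⟫ - x (Fin.last N) * ξ (Fin.last N))
            * Real.sin (x (Fin.last N) * ξ (Fin.last N))
            - x (Fin.last N) * ξ (Fin.last N)) * v₀ x := by ring
      calc |Real.cos (⟪x, ξ⟫ - x (Fin.last N) * ξ (Fin.last N))
            * Real.sin (x (Fin.last N) * ξ (Fin.last N)) * v₀ x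
          - x (Fin.last N) * ξ (Fin.last N) * v₀ x|
          = |Real.cos (⟪x, ξ⟫ - x (Fin.last N) * ξ (Fin.last N))
            * Real.sin (x (Fin.last N) * ξ (Fin.last N))
            - x (Fin.last N) * ξ (Fin.last N)| * |v₀ x| := by rw [hexp, abs_mul]
        _ ≤ (3 * |x (Fin.last N) * ξ (Fin.last N)| * min 2 (‖x‖ * ‖ξ‖)) * |v₀ x| := by
            apply mul_le_mul_of_nonneg_right key (abs_nonneg _)
        _ = 3 * |ξ (Fin.last N)| * (|x (Fin.last N) * v₀ x| * min 2 (‖x‖ * ‖ξ‖)) := by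
            rw [abs_mul, abs_mul]
            ring
    refine le_trans hmono ?_
    rw [integral_const_mul]
    exact le_of_eq rfl
  · -- cos part
    rw [hC, abs_neg]
    have hb1 : |∫ x, Real.sin (⟪x, ξ⟫ - x (Fin.last N) * ξ (Fin.last N))
          * Real.sin (x (Fin.last N) * ξ (Fin.last N)) * v₀ x|
        ≤ ∫ x, |Real.sin (⟪x, ξ⟫ - x (Fin.last N) * ξ (Fin.last N))
          * Real.sin (x (Fin.last N) * ξ (Fin.last N)) * v₀ x| := by
      have := norm_integral_le_integral_norm (μ := volume)
        (f := fun x : EuclideanSpace ℝ (Fin (N+1)) =>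
          Real.sin (⟪x, ξ⟫ - x (Fin.last N) * ξ (Fin.last N))
            * Real.sin (x (Fin.last N) * ξ (Fin.last N)) * v₀ x)
      simpa only [Real.norm_eq_abs] using this
    refine le_trans hb1 ?_
    have hmono : ∫ x, |Real.sin (⟪x, ξ⟫ - x (Fin.last N) * ξ (Fin.last N))
          * Real.sin (x (Fin.last N) * ξ (Fin.last N)) * v₀ x|
        ≤ ∫ x, 2 * |ξ (Fin.last N)| * (|x (Fin.last N) * v₀ x| * min 2 (‖x‖ * ‖ξ‖)) := by
      apply integral_mono I4.abs ((auxD_int v₀ hm₁ ξ).const_mul _)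
      intro x
      have hu0 : (0:ℝ) ≤ ‖x‖ * ‖ξ‖ := mul_nonneg (norm_nonneg _) (norm_nonneg _)
      have hTu : |x (Fin.last N) * ξ (Fin.last N)| ≤ ‖x‖ * ‖ξ‖ := by
        rw [abs_mul]
        exact mul_le_mul (aux_coord_le x) (aux_coord_le ξ) (abs_nonneg _) (norm_nonneg _)
      have hSu : |⟪x, ξ⟫ - x (Fin.last N) * ξ (Fin.last N)| ≤ 2 * (‖x‖ * ‖ξ‖) := by
        calc |⟪x, ξ⟫ - x (Fin.last N) * ξ (Fin.last N)|
            ≤ |⟪x, ξ⟫| + |x (Fin.last N) * ξ (Fin.last N)| := abs_sub _ _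
          _ ≤ ‖x‖ * ‖ξ‖ + (‖x‖ * ‖ξ‖) := add_le_add (abs_real_inner_le_norm x ξ) hTu
          _ = 2 * (‖x‖ * ‖ξ‖) := by ring
      have hsinS : |Real.sin (⟪x, ξ⟫ - x (Fin.last N) * ξ (Fin.last N))|
          ≤ 2 * min 2 (‖x‖ * ‖ξ‖) := by
        calc |Real.sin (⟪x, ξ⟫ - x (Fin.last N) * ξ (Fin.last N))|
            ≤ min 2 |⟪x, ξ⟫ - x (Fin.last N) * ξ (Fin.last N)| := aux_abs_sin _
          _ ≤ min 2 (2 * (‖x‖ * ‖ξ‖)) := min_le_min le_rfl hSu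
          _ ≤ 2 * min 2 (‖x‖ * ‖ξ‖) := aux_min2 hu0
      have hsinT : |Real.sin (x (Fin.last N) * ξ (Fin.last N))|
          ≤ |x (Fin.last N) * ξ (Fin.last N)| := Real.abs_sin_le_abs
      have hmin0 : (0:ℝ) ≤ min 2 (‖x‖ * ‖ξ‖) := le_min (by norm_num) hu0
      calc |Real.sin (⟪x, ξ⟫ - x (Fin.last N) * ξ (Fin.last N))
            * Real.sin (x (Fin.last N) * ξ (Fin.last N)) * v₀ x|
          = |Real.sin (⟪x, ξ⟫ - x (Fin.last N) * ξ (Fin.last N))|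
            * |Real.sin (x (Fin.last N) * ξ (Fin.last N))| * |v₀ x| := by
            rw [abs_mul, abs_mul]
        _ ≤ (2 * min 2 (‖x‖ * ‖ξ‖)) * |x (Fin.last N) * ξ (Fin.last N)| * |v₀ x| := by
            apply mul_le_mul_of_nonneg_right _ (abs_nonneg _)
            exact mul_le_mul hsinS hsinT (abs_nonneg _) (by positivity)
        _ = 2 * |ξ (Fin.last N)| * (|x (Fin.last N) * v₀ x| * min 2 (‖x‖ * ‖ξ‖)) := by
            rw [abs_mul, abs_mul]
            ring
    refine le_trans hmono ?_
    rw [integral_const_mul]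
    exact le_of_eq rfl

end core2


section final
open scoped Topology

/-- For `v₀ ∈ L¹(ℝᴺ)` odd in the last variable, nonnegative on the upper
half-space, with finite first moment `m₁ = ∫_{x_N>0} x_N v₀`, one has
`Im(v̂₀(ξ)) = -ξ_N(2m₁ + o(1))` and `|v̂₀(ξ)| = |ξ_N|(2m₁ + o(1))` as `ξ → 0`.
Here `Im(v̂₀(ξ)) = -∫ sin(x·ξ) v₀(x) dx`. -/
theorem stmt6 {N : ℕ} (v₀ : EuclideanSpace ℝ (Fin (N + 1)) → ℝ)
    (hInt : Integrable v₀)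
    (hodd : ∀ x : EuclideanSpace ℝ (Fin (N + 1)),
      v₀ (WithLp.toLp 2 (Function.update x (Fin.last N) (-(x (Fin.last N))))) = - v₀ x)
    (hpos : ∀ x : EuclideanSpace ℝ (Fin (N + 1)), 0 < x (Fin.last N) → 0 ≤ v₀ x)
    (hm₁ : Integrable (fun x : EuclideanSpace ℝ (Fin (N + 1)) => x (Fin.last N) * v₀ x))
    (m₁ : ℝ)
    (hm₁def : m₁ = ∫ x in {x : EuclideanSpace ℝ (Fin (N + 1)) | 0 < x (Fin.last N)},
      x (Fin.last N) * v₀ x) :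
    ((fun ξ : EuclideanSpace ℝ (Fin (N + 1)) =>
        (- ∫ x, Real.sin ⟪x, ξ⟫ * v₀ x) + ξ (Fin.last N) * (2 * m₁))
      =o[nhds 0] (fun ξ => ξ (Fin.last N))) ∧
    ((fun ξ : EuclideanSpace ℝ (Fin (N + 1)) =>
        ‖∫ x, Complex.exp (-(Complex.I * ((⟪x, ξ⟫ : ℝ) : ℂ))) * (v₀ x : ℂ)‖
          - |ξ (Fin.last N)| * (2 * m₁))
      =o[nhds 0] (fun ξ => ξ (Fin.last N))) := by
  have hM : ∫ x, x (Fin.last N) * v₀ x = 2 * m₁ := by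
    rw [aux_moment v₀ hodd hm₁, ← hm₁def]
  have hm1nn : 0 ≤ m₁ := by
    rw [hm₁def]
    apply setIntegral_nonneg (measurableSet_lt measurable_const aux_meas_last)
    intro x hx
    exact mul_nonneg (le_of_lt hx) (hpos x hx)
  have hz : ∀ ξ : EuclideanSpace ℝ (Fin (N + 1)),
      (∫ x, Complex.exp (-(Complex.I * ((⟪x, ξ⟫ : ℝ) : ℂ))) * (v₀ x : ℂ))
      = ((∫ x, Real.cos ⟪x, ξ⟫ * v₀ x : ℝ) : ℂ)
        + ((-(∫ x, Real.sin ⟪x, ξ⟫ * v₀ x) : ℝ) : ℂ) * Complex.I := by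
    intro ξ
    have hcinner : Continuous fun x : EuclideanSpace ℝ (Fin (N+1)) => ⟪x, ξ⟫ :=
      continuous_id.inner continuous_const
    have Icos : Integrable (fun x : EuclideanSpace ℝ (Fin (N+1)) =>
        Real.cos ⟪x, ξ⟫ * v₀ x) :=
      hInt.bdd_mul ((Real.continuous_cos.comp hcinner).aestronglyMeasurable)
        (c := 1) (Filter.Eventually.of_forall fun x => by rw [Real.norm_eq_abs]; exact Real.abs_cos_le_one _)
    have Isin : Integrable (fun x : EuclideanSpace ℝ (Fin (N+1)) =>
        Real.sin ⟪x, ξ⟫ * v₀ x) :=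
      hInt.bdd_mul ((Real.continuous_sin.comp hcinner).aestronglyMeasurable)
        (c := 1) (Filter.Eventually.of_forall fun x => by rw [Real.norm_eq_abs]; exact Real.abs_sin_le_one _)
    have hpt : ∀ x : EuclideanSpace ℝ (Fin (N+1)),
        Complex.exp (-(Complex.I * ((⟪x, ξ⟫ : ℝ) : ℂ))) * (v₀ x : ℂ)
        = ((Real.cos ⟪x, ξ⟫ * v₀ x : ℝ) : ℂ)
          + ((-(Real.sin ⟪x, ξ⟫ * v₀ x) : ℝ) : ℂ) * Complex.I := by
      intro x
      have e : -(Complex.I * ((⟪x, ξ⟫ : ℝ) : ℂ)) = ((-⟪x, ξ⟫ : ℝ) : ℂ) * Complex.I := by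
        push_cast; ring
      rw [e, Complex.exp_mul_I, ← Complex.ofReal_cos, ← Complex.ofReal_sin,
        Real.cos_neg, Real.sin_neg]
      push_cast
      ring
    have IA : Integrable (fun x : EuclideanSpace ℝ (Fin (N+1)) =>
        ((Real.cos ⟪x, ξ⟫ * v₀ x : ℝ) : ℂ)) := Icos.ofReal
    have IB : Integrable (fun x : EuclideanSpace ℝ (Fin (N+1)) =>
        ((-(Real.sin ⟪x, ξ⟫ * v₀ x) : ℝ) : ℂ) * Complex.I) :=
      (Isin.neg.ofReal).mul_const Complex.I
    have e1 : ∫ x : EuclideanSpace ℝ (Fin (N+1)), ((Real.cos ⟪x, ξ⟫ * v₀ x : ℝ) : ℂ)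
        = ((∫ x : EuclideanSpace ℝ (Fin (N+1)), Real.cos ⟪x, ξ⟫ * v₀ x : ℝ) : ℂ) :=
      integral_ofReal
    have e2 : ∫ x : EuclideanSpace ℝ (Fin (N+1)), ((-(Real.sin ⟪x, ξ⟫ * v₀ x) : ℝ) : ℂ)
        = ((∫ x : EuclideanSpace ℝ (Fin (N+1)), -(Real.sin ⟪x, ξ⟫ * v₀ x) : ℝ) : ℂ) :=
      integral_ofReal
    rw [integral_congr_ae (Filter.Eventually.of_forall hpt),
      integral_add IA IB,
      integral_mul_const, e1, e2, integral_neg]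
  constructor
  · rw [isLittleO_iff]
    intro c hc
    have hev : ∀ᶠ ξ in 𝓝 (0 : EuclideanSpace ℝ (Fin (N+1))), auxD N v₀ ξ < c/3 :=
      (auxD_tendsto v₀ hm₁).eventually (eventually_lt_nhds (by positivity))
    filter_upwards [hev] with ξ hξ
    have hcore := (aux_core v₀ hInt hodd hm₁ ξ).1
    rw [hM] at hcore
    rw [Real.norm_eq_abs, Real.norm_eq_abs]
    have he : |(- ∫ x, Real.sin ⟪x, ξ⟫ * v₀ x) + ξ (Fin.last N) * (2 * m₁)|
        = |(∫ x, Real.sin ⟪x, ξ⟫ * v₀ x) - ξ (Fin.last N) * (2 * m₁)| := by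
      rw [show (- ∫ x, Real.sin ⟪x, ξ⟫ * v₀ x) + ξ (Fin.last N) * (2 * m₁)
        = -((∫ x, Real.sin ⟪x, ξ⟫ * v₀ x) - ξ (Fin.last N) * (2 * m₁)) by ring, abs_neg]
    rw [he]
    have h2 : 3 * |ξ (Fin.last N)| * auxD N v₀ ξ ≤ 3 * |ξ (Fin.last N)| * (c/3) :=
      mul_le_mul_of_nonneg_left hξ.le (by positivity)
    have h3 : 3 * |ξ (Fin.last N)| * (c/3) = c * |ξ (Fin.last N)| := by ring
    linarith
  · rw [isLittleO_iff]
    intro c hc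
    have hev : ∀ᶠ ξ in 𝓝 (0 : EuclideanSpace ℝ (Fin (N+1))), auxD N v₀ ξ < c/5 :=
      (auxD_tendsto v₀ hm₁).eventually (eventually_lt_nhds (by positivity))
    filter_upwards [hev] with ξ hξ
    have hcore := aux_core v₀ hInt hodd hm₁ ξ
    have hS := hcore.1
    rw [hM] at hS
    have hC := hcore.2
    rw [hz ξ]
    set Sv := ∫ x, Real.sin ⟪x, ξ⟫ * v₀ x with hSv
    set Cv := ∫ x, Real.cos ⟪x, ξ⟫ * v₀ x with hCv
    set z : ℂ := ((Cv : ℝ) : ℂ) + ((-Sv : ℝ) : ℂ) * Complex.I with hzdef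
    have hzre : z.re = Cv := by simp [hzdef]
    have hzim : z.im = -Sv := by simp [hzdef]
    have l1 : |Sv| ≤ ‖z‖ := by
      have := Complex.abs_im_le_norm z
      rwa [hzim, abs_neg] at this
    have l2 : ‖z‖ ≤ |Cv| + |Sv| := by
      have := Complex.norm_le_abs_re_add_abs_im z
      rwa [hzre, hzim, abs_neg] at this
    have htri1 : |‖z‖ - (|Sv|)| ≤ |Cv| :=
      abs_le.2 ⟨by linarith [abs_nonneg Cv], by linarith⟩
    have htri2 : |(|Sv|) - |ξ (Fin.last N)| * (2 * m₁)| ≤ |Sv - ξ (Fin.last N) * (2 * m₁)| := by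
      have hA : |ξ (Fin.last N) * (2 * m₁)| = |ξ (Fin.last N)| * (2 * m₁) := by
        rw [abs_mul, abs_of_nonneg (by linarith : (0:ℝ) ≤ 2 * m₁)]
      have h := abs_sub_abs_le_abs_sub Sv (ξ (Fin.last N) * (2 * m₁))
      have h' := abs_sub_abs_le_abs_sub (ξ (Fin.last N) * (2 * m₁)) Sv
      rw [abs_sub_comm] at h'
      rw [hA] at h h'
      exact abs_le.2 ⟨by linarith, h⟩
    have htri : |‖z‖ - |ξ (Fin.last N)| * (2 * m₁)|
        ≤ |‖z‖ - (|Sv|)| + |(|Sv|) - |ξ (Fin.last N)| * (2 * m₁)| :=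
      abs_sub_le _ _ _
    rw [Real.norm_eq_abs, Real.norm_eq_abs]
    have h5 : 5 * |ξ (Fin.last N)| * auxD N v₀ ξ ≤ 5 * |ξ (Fin.last N)| * (c/5) :=
      mul_le_mul_of_nonneg_left hξ.le (by positivity)
    have h6 : 5 * |ξ (Fin.last N)| * (c/5) = c * |ξ (Fin.last N)| := by ring
    linarith

end final
end

section
/- (Odd kernel evaluation away from the support of the truncation.) Let J ∈ L¹(ℝᴺ) be nonnegative, even in x_N and even in x'. Let φ(x) = x_N and let ζ_R(x) = ρ(|x|/R) with ρ ∈ C_c^∞(ℝ) even, 1_{[−1,1]} ≤ ρ ≤ 1_{[−2,2]}. Define Au = J*u − u. Then for |x| ≥ 2R: A(φζ_R)(x) = (1/2) ∫_{[|y|<2R]∩[y_N>0]} [J(x'−y',x_N−y_N) − J(x'−y',x_N+y_N) + J(x'+y',x_N−y_N) − J(x'+y',x_N+y_N)] y_N ζ_R(y) dy, and this quantity is nonnegative when x_N ≥ 0 and odd in x_N; consequently x_N · A(φζ_R)(x) ≥ 0 for all |x| ≥ 2R, provided additionally z_N ↦ J(z', z_N) is nonincreasing on (0,∞) for each z'.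 -/
open MeasureTheory Real Set

private lemma rho_vanish (ρ : ℝ → ℝ) (hc : Continuous ρ)
    (h0 : ∀ s : ℝ, 2 < |s| → ρ s = 0) : ∀ s : ℝ, 2 ≤ s → ρ s = 0 := by
  intro s hs
  rcases eq_or_lt_of_le hs with h | h
  · have hsub : Ioi (2:ℝ) ⊆ ρ ⁻¹' {0} := fun t ht => by
      have : (2:ℝ) < t := ht
      exact h0 t (by rw [abs_of_pos (by linarith)]; exact this)
    have hcl : IsClosed (ρ ⁻¹' {0}) := isClosed_singleton.preimage hc
    have h2 : (2:ℝ) ∈ closure (Ioi (2:ℝ)) := by rw [closure_Ioi]; exact self_mem_Ici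
    have := (hcl.closure_subset_iff.mpr hsub) h2
    rw [← h]; exact this
  · exact h0 s (by rw [abs_of_pos (by linarith)]; exact h)

/-- odd kernel evaluation away from the support of the truncation.
Ambient space `ℝ^(N+1)`; `σ` reflects the last coordinate, so that
`x − σy = (x'−y', x_N+y_N)`, `x + σy = (x'+y', x_N−y_N)`.  `Au = J*u − u`,
`φ(x) = x_N`, `ζ_R(x) = ρ(|x|/R)`. -/
theorem stmt12 {N : ℕ} (J : EuclideanSpace ℝ (Fin (N + 1)) → ℝ)
    (σ : EuclideanSpace ℝ (Fin (N + 1)) → EuclideanSpace ℝ (Fin (N + 1)))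
    (hσ : ∀ z, σ z = Function.update z (Fin.last N) (-(z (Fin.last N))))
    (hJint : Integrable J) (hJpos : ∀ z, 0 ≤ J z)
    (hJevenN : ∀ z, J (σ z) = J z)      -- even in x_N
    (hJeven' : ∀ z, J (-(σ z)) = J z)   -- even in x'
    (ρ : ℝ → ℝ) (hρsmooth : ContDiff ℝ (⊤ : ℕ∞) ρ) (hρsupp : HasCompactSupport ρ)
    (hρeven : ∀ s, ρ (-s) = ρ s)
    (hρ1 : ∀ s : ℝ, |s| ≤ 1 → ρ s = 1) (hρ0 : ∀ s : ℝ, 2 < |s| → ρ s = 0)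
    (hρrange : ∀ s, 0 ≤ ρ s ∧ ρ s ≤ 1)
    (R : ℝ) (hR : 0 < R)
    (Aψ : EuclideanSpace ℝ (Fin (N + 1)) → ℝ)
    (hAψ : ∀ x, Aψ x = (∫ y, J (x - y) * (y (Fin.last N) * ρ (‖y‖ / R)))
      - x (Fin.last N) * ρ (‖x‖ / R)) :
    ∀ x : EuclideanSpace ℝ (Fin (N + 1)), 2 * R ≤ ‖x‖ →
      (Aψ x = (1/2) * ∫ y in {y : EuclideanSpace ℝ (Fin (N + 1)) |
            ‖y‖ < 2 * R ∧ 0 < y (Fin.last N)},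
          (J (x - y) - J (x - σ y) + J (x + σ y) - J (x + y))
            * (y (Fin.last N) * ρ (‖y‖ / R))) ∧
      (Aψ (σ x) = - Aψ x) ∧
      ((∀ (z : EuclideanSpace ℝ (Fin (N + 1))) (s t : ℝ), 0 < s → s ≤ t →
          J (WithLp.toLp 2 (Function.update z (Fin.last N) t)) ≤ J (WithLp.toLp 2 (Function.update z (Fin.last N) s))) →
        (0 ≤ x (Fin.last N) → 0 ≤ Aψ x) ∧ 0 ≤ x (Fin.last N) * Aψ x) := by
  set n := Fin.last N with hn
  -- basic facts about σ
  have hσn : ∀ z, σ z n = -(z n) := by intro z; rw [hσ]; simp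
  have hσi : ∀ z i, i ≠ n → σ z i = z i := by
    intro z i hi; rw [hσ]; exact Function.update_of_ne hi _ _
  have hσσ : ∀ z, σ (σ z) = z := by
    intro z; ext i
    by_cases h : i = n
    · subst h; rw [hσn, hσn, neg_neg]
    · rw [hσi _ _ h, hσi _ _ h]
  have hσadd : ∀ a b, σ (a + b) = σ a + σ b := by
    intro a b; ext i
    by_cases h : i = n
    · subst h; rw [hσn, PiLp.add_apply, PiLp.add_apply, hσn, hσn]; ring
    · rw [hσi _ _ h, PiLp.add_apply, PiLp.add_apply, hσi _ _ h, hσi _ _ h]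
  have hσsmul : ∀ (c : ℝ) a, σ (c • a) = c • σ a := by
    intro c a; ext i
    by_cases h : i = n
    · subst h; rw [hσn, PiLp.smul_apply, PiLp.smul_apply, hσn, smul_neg]
    · rw [hσi _ _ h, PiLp.smul_apply, PiLp.smul_apply, hσi _ _ h]
  have hσnorm : ∀ z, ‖σ z‖ = ‖z‖ := by
    intro z
    rw [EuclideanSpace.norm_eq, EuclideanSpace.norm_eq]
    congr 1
    apply Finset.sum_congr rfl
    intro i _
    by_cases h : i = n
    · subst h; rw [hσn]; simp
    · rw [hσi _ _ h]
  have hσneg : ∀ a, σ (-a) = -σ a := by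
    intro a
    have := hσsmul (-1 : ℝ) a
    simpa using this
  have hσsub : ∀ a b, σ (a - b) = σ a - σ b := by
    intro a b
    rw [sub_eq_add_neg, hσadd, hσneg, sub_eq_add_neg]
  let Lσ : EuclideanSpace ℝ (Fin (N + 1)) ≃ₗᵢ[ℝ] EuclideanSpace ℝ (Fin (N + 1)) :=
    { toFun := σ
      invFun := σ
      left_inv := hσσ
      right_inv := hσσ
      map_add' := hσadd
      map_smul' := hσsmul
      norm_map' := hσnorm }
  have hmp : MeasurePreserving σ volume volume := Lσ.measurePreserving
  have hemb : MeasurableEmbedding σ := Lσ.toHomeomorph.measurableEmbedding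
  have hsubst : ∀ F : EuclideanSpace ℝ (Fin (N + 1)) → ℝ,
      (∫ y, F (σ y)) = ∫ y, F y := fun F => hmp.integral_comp hemb F
  have hnegsub : ∀ F : EuclideanSpace ℝ (Fin (N + 1)) → ℝ,
      (∫ y, F (-y)) = ∫ y, F y := fun F => integral_neg_eq_self F volume
  -- the truncation factor
  set g : EuclideanSpace ℝ (Fin (N + 1)) → ℝ := fun y => y n * ρ (‖y‖ / R) with hgdef
  have hρz : ∀ s : ℝ, 2 ≤ s → ρ s = 0 := rho_vanish ρ hρsmooth.continuous hρ0
  have hcontn : Continuous fun y : EuclideanSpace ℝ (Fin (N + 1)) => y n :=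
    (EuclideanSpace.proj (𝕜 := ℝ) n).continuous
  have hgcont : Continuous g :=
    hcontn.mul (hρsmooth.continuous.comp (continuous_norm.div_const R))
  have hgneg : ∀ y, g (-y) = -g y := by
    intro y; simp only [hgdef, PiLp.neg_apply, norm_neg, neg_mul]
  have hgσ : ∀ y, g (σ y) = -g y := by
    intro y; simp only [hgdef, hσn, hσnorm, neg_mul]
  have hgzero : ∀ y, 2 * R ≤ ‖y‖ → g y = 0 := by
    intro y hy
    have : ρ (‖y‖ / R) = 0 := hρz _ ((le_div_iff₀ hR).mpr (by linarith))
    simp [hgdef, this]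
  have habs : ∀ y : EuclideanSpace ℝ (Fin (N + 1)), |y n| ≤ ‖y‖ := by
    intro y
    rw [EuclideanSpace.norm_eq]
    calc |y n| = Real.sqrt (‖y n‖ ^ 2) := by
          rw [Real.sqrt_sq_eq_abs, Real.norm_eq_abs, abs_abs]
      _ ≤ Real.sqrt (∑ i, ‖y i‖ ^ 2) :=
          Real.sqrt_le_sqrt (Finset.single_le_sum (f := fun i => ‖y i‖ ^ 2)
            (fun i _ => sq_nonneg _) (Finset.mem_univ n))
  have hgbd : ∀ y, ‖g y‖ ≤ 2 * R := by
    intro y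
    rcases le_or_gt ‖y‖ (2 * R) with h | h
    · rw [Real.norm_eq_abs, hgdef, abs_mul]
      calc |y n| * |ρ (‖y‖ / R)| ≤ ‖y‖ * 1 := by
            apply mul_le_mul (habs y) _ (abs_nonneg _) (norm_nonneg _)
            rw [abs_le]; exact ⟨by linarith [(hρrange (‖y‖ / R)).1], (hρrange _).2⟩
        _ ≤ 2 * R := by linarith
    · rw [hgzero y h.le]; simp; positivity
  -- integrability of the four pieces
  have hbdd : ∃ C, ∀ y, ‖g y‖ ≤ C := ⟨2 * R, hgbd⟩
  have mkint : ∀ F : EuclideanSpace ℝ (Fin (N + 1)) → ℝ, Integrable F →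
      Integrable (fun y => F y * g y) := by
    intro F hF
    have h1 : Integrable (fun y => g y * F y) :=
      hF.bdd_mul hgcont.aestronglyMeasurable (c := 2 * R) (Filter.Eventually.of_forall hgbd)
    exact h1.congr (by filter_upwards with y using mul_comm (g y) (F y))
  have hplane : ∀ c : ℝ, volume {y : EuclideanSpace ℝ (Fin (N + 1)) | y n = c} = 0 := by
    intro c
    have hK : LinearMap.ker (EuclideanSpace.projₗ (𝕜 := ℝ) n) ≠ ⊤ := by
      intro h
      have h1 : EuclideanSpace.single n (1:ℝ) ∈
          LinearMap.ker (EuclideanSpace.projₗ (𝕜 := ℝ) n) := h ▸ Submodule.mem_top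
      have : EuclideanSpace.single n (1:ℝ) n = 0 := h1
      rw [EuclideanSpace.single_apply] at this
      simp at this
    have h0 : volume ((LinearMap.ker (EuclideanSpace.projₗ (𝕜 := ℝ) n) :
        Submodule ℝ (EuclideanSpace ℝ (Fin (N + 1)))) : Set (EuclideanSpace ℝ (Fin (N + 1)))) = 0 :=
      Measure.addHaar_submodule _ _ hK
    have hset : {y : EuclideanSpace ℝ (Fin (N + 1)) | y n = c} =
        (fun y => y + EuclideanSpace.single n (-c)) ⁻¹'
          ((LinearMap.ker (EuclideanSpace.projₗ (𝕜 := ℝ) n) :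
            Submodule ℝ (EuclideanSpace ℝ (Fin (N + 1)))) : Set _) := by
      ext y
      simp only [mem_setOf_eq, mem_preimage, SetLike.mem_coe, LinearMap.mem_ker]
      have : (EuclideanSpace.projₗ (𝕜 := ℝ) n) (y + EuclideanSpace.single n (-c)) =
          y n + (-c) := by
        simp [EuclideanSpace.projₗ, PiLp.add_apply, EuclideanSpace.single_apply]
      rw [this]
      constructor <;> intro h <;> linarith
    rw [hset, measure_preimage_add_right]
    exact h0
  -- measurable sets
  have hmeasn : MeasurableSet {y : EuclideanSpace ℝ (Fin (N + 1)) | 0 < y n} :=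
    (isOpen_lt continuous_const hcontn).measurableSet
  have hmeasB : MeasurableSet {y : EuclideanSpace ℝ (Fin (N + 1)) | ‖y‖ < 2 * R} :=
    (isOpen_lt continuous_norm continuous_const).measurableSet
  have hmeasS : MeasurableSet {y : EuclideanSpace ℝ (Fin (N + 1)) | ‖y‖ < 2 * R ∧ 0 < y n} := by
    have : {y : EuclideanSpace ℝ (Fin (N + 1)) | ‖y‖ < 2 * R ∧ 0 < y n} =
        {y | ‖y‖ < 2 * R} ∩ {y | 0 < y n} := rfl
    rw [this]; exact hmeasB.inter hmeasn
  -- the key formula, for any x with 2R ≤ ‖x‖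
  have key : ∀ x : EuclideanSpace ℝ (Fin (N + 1)), 2 * R ≤ ‖x‖ →
      Aψ x = (1/2) * ∫ y in {y : EuclideanSpace ℝ (Fin (N + 1)) |
          ‖y‖ < 2 * R ∧ 0 < y n},
        (J (x - y) - J (x - σ y) + J (x + σ y) - J (x + y)) * g y := by
    intro x hx
    have int1 : Integrable (fun y => J (x - y) * g y) := mkint _ (hJint.comp_sub_left x)
    have int2 : Integrable (fun y => J (x - σ y) * g y) := by
      apply mkint
      exact (hmp.integrable_comp_emb hemb).mpr (hJint.comp_sub_left x)
    have int3 : Integrable (fun y => J (x + σ y) * g y) := by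
      apply mkint
      exact (hmp.integrable_comp_emb hemb).mpr (hJint.comp_add_left x)
    have int4 : Integrable (fun y => J (x + y) * g y) := mkint _ (hJint.comp_add_left x)
    set I : ℝ := ∫ y, J (x - y) * g y with hI
    have e2 : (∫ y, J (x - σ y) * g y) = -I := by
      have h1 : (∫ y, J (x - σ (σ y)) * g (σ y)) = ∫ y, J (x - σ y) * g y :=
        hsubst (fun y => J (x - σ y) * g y)
      rw [← h1]
      have : (fun y => J (x - σ (σ y)) * g (σ y)) = fun y => -(J (x - y) * g y) := by
        funext y; rw [hσσ, hgσ, mul_neg]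
      rw [this, integral_neg]
    have e4 : (∫ y, J (x + y) * g y) = -I := by
      have h1 : (∫ y, J (x + -y) * g (-y)) = ∫ y, J (x + y) * g y :=
        hnegsub (fun y => J (x + y) * g y)
      rw [← h1]
      have : (fun y => J (x + -y) * g (-y)) = fun y => -(J (x - y) * g y) := by
        funext y; rw [hgneg, mul_neg, ← sub_eq_add_neg]
      rw [this, integral_neg]
    have e3 : (∫ y, J (x + σ y) * g y) = I := by
      have h1 : (∫ y, J (x + σ (-y)) * g (-y)) = ∫ y, J (x + σ y) * g y :=
        hnegsub (fun y => J (x + σ y) * g y)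
      rw [← h1]
      have : (fun y => J (x + σ (-y)) * g (-y)) = fun y => -(J (x - σ y) * g y) := by
        funext y; rw [hσneg, hgneg, mul_neg, ← sub_eq_add_neg]
      rw [this, integral_neg, e2, neg_neg]
    set h : EuclideanSpace ℝ (Fin (N + 1)) → ℝ :=
      fun y => (J (x - y) - J (x - σ y) + J (x + σ y) - J (x + y)) * g y with hhdef
    have hhexpand : h = fun y => J (x - y) * g y - J (x - σ y) * g y
        + J (x + σ y) * g y - J (x + y) * g y := by
      funext y; simp only [hhdef]; ring
    have intA : Integrable (fun y => J (x - y) * g y - J (x - σ y) * g y) := int1.sub int2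
    have intAB : Integrable (fun y =>
        J (x - y) * g y - J (x - σ y) * g y + J (x + σ y) * g y) := intA.add int3
    have hhint : Integrable h := by
      rw [hhexpand]; exact intAB.sub int4
    have etot : (∫ y, h y) = 4 * I := by
      rw [hhexpand]
      rw [integral_sub intAB int4, integral_add intA int3, integral_sub int1 int2,
        e2, e3, e4]
      ring
    have hhσ : ∀ y, h (σ y) = h y := by
      intro y; simp only [hhdef]
      rw [hσσ, hgσ]; ring
    -- fold onto the upper half space
    have hsplit : (∫ y, h y) = (∫ y in {y | 0 < y n}, h y)
        + ∫ y in {y : EuclideanSpace ℝ (Fin (N + 1)) | 0 < y n}ᶜ, h y :=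
      (integral_add_compl hmeasn hhint).symm
    have hcompl_ae : ({y : EuclideanSpace ℝ (Fin (N + 1)) | 0 < y n}ᶜ : Set _)
        =ᵐ[volume] {y : EuclideanSpace ℝ (Fin (N + 1)) | y n < 0} := by
      rw [Filter.eventuallyEq_set]
      have h0 := hplane 0
      rw [← compl_mem_ae_iff] at h0
      filter_upwards [h0] with y hy
      simp only [mem_compl_iff, mem_setOf_eq, not_lt] at hy ⊢
      constructor
      · intro h'; exact lt_of_le_of_ne h' (by simpa using hy)
      · intro h'; exact h'.le
    have hpre : σ ⁻¹' {y : EuclideanSpace ℝ (Fin (N + 1)) | 0 < y n}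
        = {y : EuclideanSpace ℝ (Fin (N + 1)) | y n < 0} := by
      ext y; simp only [mem_preimage, mem_setOf_eq, hσn, neg_pos]
    have hlower : (∫ y in {y : EuclideanSpace ℝ (Fin (N + 1)) | y n < 0}, h y)
        = ∫ y in {y | 0 < y n}, h y := by
      have hσfun : (fun y => h (σ y)) = h := funext hhσ
      calc (∫ y in {y : EuclideanSpace ℝ (Fin (N + 1)) | y n < 0}, h y)
          = ∫ y in σ ⁻¹' {y | 0 < y n}, h (σ y) := by rw [hpre, hσfun]
        _ = ∫ y in {y | 0 < y n}, h y := hmp.setIntegral_preimage_emb hemb h _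
    have hhalf : (∫ y, h y) = 2 * ∫ y in {y | 0 < y n}, h y := by
      rw [hsplit, setIntegral_congr_set hcompl_ae, hlower]; ring
    -- restrict to the ball
    have hrestrict : (∫ y in {y : EuclideanSpace ℝ (Fin (N + 1)) | 0 < y n}, h y)
        = ∫ y in {y : EuclideanSpace ℝ (Fin (N + 1)) | ‖y‖ < 2 * R ∧ 0 < y n}, h y := by
      have hinter := integral_inter_add_diff (f := h) (μ := volume)
        (s := {y : EuclideanSpace ℝ (Fin (N + 1)) | 0 < y n})
        (t := {y : EuclideanSpace ℝ (Fin (N + 1)) | ‖y‖ < 2 * R}) hmeasB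
        hhint.integrableOn
      have hzero : (∫ y in {y : EuclideanSpace ℝ (Fin (N + 1)) | 0 < y n}
          \ {y | ‖y‖ < 2 * R}, h y) = 0 := by
        apply setIntegral_eq_zero_of_forall_eq_zero
        intro y hy
        have : 2 * R ≤ ‖y‖ := not_lt.mp hy.2
        simp only [hhdef, hgzero y this, mul_zero]
      have hseteq : {y : EuclideanSpace ℝ (Fin (N + 1)) | 0 < y n}
          ∩ {y | ‖y‖ < 2 * R} = {y | ‖y‖ < 2 * R ∧ 0 < y n} := by
        ext y; simp only [mem_inter_iff, mem_setOf_eq]; tauto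
      rw [← hinter, hseteq, hzero, add_zero]
    have hAx : Aψ x = I := by
      rw [hAψ, hI]
      have : ρ (‖x‖ / R) = 0 := hρz _ ((le_div_iff₀ hR).mpr (by linarith))
      rw [this, mul_zero, sub_zero]
    rw [hAx]
    have : (∫ y in {y : EuclideanSpace ℝ (Fin (N + 1)) | ‖y‖ < 2 * R ∧ 0 < y n}, h y)
        = 2 * I := by
      rw [← hrestrict]
      have := hhalf
      rw [etot] at this
      linarith
    rw [show (∫ y in {y : EuclideanSpace ℝ (Fin (N + 1)) | ‖y‖ < 2 * R ∧ 0 < y n},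
        (J (x - y) - J (x - σ y) + J (x + σ y) - J (x + y)) * g y) =
        ∫ y in {y : EuclideanSpace ℝ (Fin (N + 1)) | ‖y‖ < 2 * R ∧ 0 < y n}, h y from rfl]
    rw [this]; ring
  -- oddness
  have hodd : ∀ x : EuclideanSpace ℝ (Fin (N + 1)), 2 * R ≤ ‖x‖ → Aψ (σ x) = -Aψ x := by
    intro x hx
    have hzx : ρ (‖x‖ / R) = 0 := hρz _ ((le_div_iff₀ hR).mpr (by linarith))
    have hzσx : ρ (‖σ x‖ / R) = 0 := by rw [hσnorm]; exact hzx
    rw [hAψ, hAψ, hzx, hzσx, mul_zero, mul_zero, sub_zero, sub_zero]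
    have h1 : (∫ y, J (σ x - σ y) * g (σ y)) = ∫ y, J (σ x - y) * g y :=
      hsubst (fun y => J (σ x - y) * g y)
    rw [← h1]
    have : (fun y => J (σ x - σ y) * g (σ y)) = fun y => -(J (x - y) * g y) := by
      funext y
      rw [← hσsub, hJevenN, hgσ, mul_neg]
    rw [this, integral_neg]
  -- positivity
  have hpos : (∀ (z : EuclideanSpace ℝ (Fin (N + 1))) (s t : ℝ), 0 < s → s ≤ t →
      J (WithLp.toLp 2 (Function.update z n t)) ≤ J (WithLp.toLp 2 (Function.update z n s))) →
      ∀ x : EuclideanSpace ℝ (Fin (N + 1)), 2 * R ≤ ‖x‖ → 0 ≤ x n → 0 ≤ Aψ x := by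
    intro hmono x hx hxn
    rw [key x hx]
    apply mul_nonneg (by norm_num)
    apply setIntegral_nonneg_ae hmeasS
    have hae : ∀ᵐ y : EuclideanSpace ℝ (Fin (N + 1)), y n ≠ x n := by
      have := hplane (x n)
      rw [ae_iff]
      convert this using 2
      ext y; simp
    filter_upwards [hae] with y hyne hyS
    obtain ⟨hyB, hyn⟩ := hyS
    have hgnn : 0 ≤ g y := mul_nonneg hyn.le (hρrange _).1
    -- monotonicity comparison
    have hkey : ∀ a : EuclideanSpace ℝ (Fin (N + 1)), a n = x n - y n →
        J (WithLp.toLp 2 (Function.update a n (x n + y n))) ≤ J a := by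
      intro a ha
      have ht : (0:ℝ) < x n + y n := by linarith
      have hs : (0:ℝ) < |a n| := by
        rw [abs_pos, ha]
        intro h'
        apply hyne
        linarith
      have hst : |a n| ≤ x n + y n := by
        rw [ha, abs_le]
        constructor <;> [linarith; linarith]
      have hJa : J (WithLp.toLp 2 (Function.update a n |a n|)) = J a := by
        rcases le_or_gt 0 (a n) with h' | h'
        · rw [abs_of_nonneg h', Function.update_eq_self, WithLp.toLp_ofLp]
        · rw [abs_of_neg h', ← hσ, WithLp.toLp_ofLp, hJevenN]
      calc J (WithLp.toLp 2 (Function.update a n (x n + y n)))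
          ≤ J (WithLp.toLp 2 (Function.update a n |a n|)) := hmono a _ _ hs hst
        _ = J a := hJa
    have hb1 : J (x - σ y) ≤ J (x - y) := by
      have h1 : x - σ y = WithLp.toLp 2 (Function.update (x - y) n (x n + y n)) := by
        ext i
        by_cases h' : i = n
        · subst h'; change _ = Function.update (WithLp.ofLp (x - y)) n (x n + y n) n; rw [Function.update_self, PiLp.sub_apply, hσn]; ring
        · change _ = Function.update (WithLp.ofLp (x - y)) n (x n + y n) i; rw [Function.update_of_ne h', PiLp.sub_apply, PiLp.sub_apply, hσi _ _ h']
      rw [h1]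
      exact hkey (x - y) (by rw [PiLp.sub_apply])
    have hb2 : J (x + y) ≤ J (x + σ y) := by
      have h1 : x + y = WithLp.toLp 2 (Function.update (x + σ y) n (x n + y n)) := by
        ext i
        by_cases h' : i = n
        · subst h'; change _ = Function.update (WithLp.ofLp (x + σ y)) n (x n + y n) n; rw [Function.update_self, PiLp.add_apply]
        · change _ = Function.update (WithLp.ofLp (x + σ y)) n (x n + y n) i; rw [Function.update_of_ne h', PiLp.add_apply, PiLp.add_apply, hσi _ _ h']
      rw [h1]
      exact hkey (x + σ y) (by rw [PiLp.add_apply, hσn]; ring)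
    have hbracket : 0 ≤ J (x - y) - J (x - σ y) + J (x + σ y) - J (x + y) := by linarith
    exact mul_nonneg hbracket hgnn
  -- conclusion
  intro x hx
  refine ⟨key x hx, hodd x hx, fun hmono => ?_⟩
  refine ⟨hpos hmono x hx, ?_⟩
  rcases le_or_gt 0 (x n) with hxn | hxn
  · exact mul_nonneg hxn (hpos hmono x hx hxn)
  · have hσx : 2 * R ≤ ‖σ x‖ := by rw [hσnorm]; exact hx
    have h1 : 0 ≤ Aψ (σ x) := hpos hmono (σ x) hσx (by rw [hσn]; linarith)
    rw [hodd x hx] at h1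
    have h2 : Aψ x ≤ 0 := by linarith
    nlinarith [mul_nonneg (neg_nonneg.2 hxn.le) (neg_nonneg.2 h2)]
end

section
/- (Vanishing first moment of Au.) Let A be a self-adjoint operator of the form Au = J*u − u with J as in the previous statement (or the Laplacian or fractional Laplacian). If u ∈ L¹(ℝᴺ) satisfies ∫ |x_N u(x)| dx < ∞ and ∫ |x_N (Au)(x)| dx < ∞, then ∫_{ℝᴺ} x_N (Au)(x) dx = 0. -/
open MeasureTheory Real Set Filter Asymptotics
open scoped RealInnerProductSpace Topology

/-!
Restrict the Fourier transform to the line through `e_N`. With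
`Â(t) = ∫ e^{-i t x_N} (Au)(x) dx`, the first moment is `Â'(0) = -i ∫ x_N (Au)(x) dx`, and the
convolution theorem gives `Â = (Ĵ - 1) û`. Since `Ĵ` is even, the odd part
`Â(t) - Â(-t) = (Ĵ(t) - 1) (û(t) - û(-t))` is a product of a factor tending to `0` (by the
asymptotics of `Ĵ` at the origin) and a factor `O(t)` (by the first moment of `u`), so it is
`o(t)` and `Â'(0) = 0`.
-/

theorem HasDerivAt.eq_zero_of_eq_mul_of_even {A g U : ℝ → ℂ} {D : ℂ}
    (hA : ∀ t, A t = g t * U t) (hg_even : ∀ t, g (-t) = g t)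
    (hg : Tendsto g (𝓝 0) (𝓝 0)) (hU : DifferentiableAt ℝ U 0) (hD : HasDerivAt A D 0) :
    D = 0 := by
  have hneg {F : ℝ → ℂ} {F' : ℂ} (h : HasDerivAt F F' 0) :
      HasDerivAt (fun t => F (-t)) (-F') 0 := by
    simpa using HasDerivAt.comp_const_sub (0 : ℝ) 0 (by simpa using h)
  have hodd : HasDerivAt (fun t => A t - A (-t)) (D + D) 0 :=
    (hD.sub (hneg hD)).congr_deriv (sub_neg_eq_add D D)
  have hU_odd : (fun t => U t - U (-t)) =O[𝓝 0] fun t => t := by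
    simpa using (hU.hasDerivAt.sub (hneg hU.hasDerivAt)).isBigO_sub
  have hA_odd : (fun t => A t - A (-t)) =o[𝓝 0] fun t => t := by
    refine (((isLittleO_one_iff ℝ).mpr hg).mul_isBigO hU_odd).congr (fun t => ?_) one_mul
    simp [hA, hg_even, mul_sub]
  have hzero : HasDerivAt (fun t => A t - A (-t)) 0 0 :=
    .of_isLittleO (by simpa using hA_odd)
  simpa using hodd.unique hzero

/-- The Fourier transform of `f` along the line `t ↦ t • v`, written for `ℓ = ⟪·, v⟫`. -/
noncomputable def fourierAlong {α : Type*} [MeasurableSpace α] (μ : Measure α) (ℓ : α → ℝ)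
    (f : α → ℝ) (t : ℝ) : ℂ :=
  ∫ x, Complex.exp (-(Complex.I * ((t * ℓ x : ℝ) : ℂ))) * (f x : ℂ) ∂μ

section Measurable

variable {α : Type*} [MeasurableSpace α] {μ : Measure α} {ℓ f g : α → ℝ}

theorem integrable_exp_mul_ofReal (hℓ : Measurable ℓ) (hf : Integrable f μ) (t : ℝ) :
    Integrable (fun x => Complex.exp (-(Complex.I * ((t * ℓ x : ℝ) : ℂ))) * (f x : ℂ)) μ :=
  hf.ofReal.bdd_mul (c := 1) (by fun_prop) (ae_of_all _ fun _ => by simp [Complex.norm_exp])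

theorem fourierAlong_sub (hℓ : Measurable ℓ) (hf : Integrable f μ) (hg : Integrable g μ)
    (t : ℝ) :
    fourierAlong μ ℓ (fun x => f x - g x) t = fourierAlong μ ℓ f t - fourierAlong μ ℓ g t := by
  simp only [fourierAlong, Complex.ofReal_sub, mul_sub]
  exact integral_sub (integrable_exp_mul_ofReal hℓ hf t) (integrable_exp_mul_ofReal hℓ hg t)

theorem hasDerivAt_fourierAlong_zero (hℓ : Measurable ℓ) (hf : Integrable f μ)
    (hℓf : Integrable (fun x => ℓ x * f x) μ) :
    HasDerivAt (fourierAlong μ ℓ f) (-(Complex.I * ∫ x, ℓ x * f x ∂μ)) 0 := by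
  have hderiv (x : α) (t : ℝ) : HasDerivAt
      (fun s : ℝ => Complex.exp (-(Complex.I * ((s * ℓ x : ℝ) : ℂ))) * (f x : ℂ))
      (-(Complex.I * ℓ x) * (Complex.exp (-(Complex.I * ((t * ℓ x : ℝ) : ℂ))) * (f x : ℂ))) t := by
    refine ((((hasDerivAt_id t).mul_const (ℓ x)).ofReal_comp.const_mul Complex.I).neg.cexp
      |>.mul_const (f x : ℂ)).congr_deriv ?_
    simp; ring
  have key := hasDerivAt_integral_of_dominated_loc_of_deriv_le (μ := μ) (x₀ := 0)
    (bound := fun x => ‖ℓ x * f x‖) univ_mem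
    (Eventually.of_forall fun t => (integrable_exp_mul_ofReal hℓ hf t).aestronglyMeasurable)
    (integrable_exp_mul_ofReal hℓ hf 0) (by fun_prop)
    (ae_of_all _ fun x t _ => by simp [norm_mul, Complex.norm_exp])
    hℓf.norm (ae_of_all _ fun x t _ => hderiv x t)
  refine key.2.congr_deriv ?_
  have hpt (x : α) : -(Complex.I * ℓ x) * (Complex.exp (-(Complex.I * ((0 * ℓ x : ℝ) : ℂ))) * f x) =
      -Complex.I * ((ℓ x * f x : ℝ) : ℂ) := by
    simp; ring
  simp_rw [hpt]
  rw [integral_const_mul, integral_complex_ofReal, neg_mul]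

end Measurable

section AddGroup

variable {G F : Type*} [AddGroup G] [MeasurableSpace G] {μ : Measure G} {J u : G → ℝ}
  [FunLike F G ℝ] [AddMonoidHomClass F G ℝ]

open scoped Convolution in
theorem fourierAlong_convolution [MeasurableAdd₂ G] [MeasurableNeg G] [SFinite μ]
    [μ.IsAddRightInvariant] (ℓ : F) (hℓ : Measurable ℓ) (hJ : Integrable J μ)
    (hu : Integrable u μ) (t : ℝ) :
    fourierAlong μ ℓ (fun x => ∫ y, J (x - y) * u y ∂μ) t =
      fourierAlong μ ℓ J t * fourierAlong μ ℓ u t := by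
  rw [mul_comm]
  unfold fourierAlong
  set e : G → ℂ := fun x => Complex.exp (-(Complex.I * ((t * ℓ x : ℝ) : ℂ)))
  have he (x y : G) : e x = e y * e (x - y) := by
    simp only [e, ← Complex.exp_add, map_sub]
    congr 1; push_cast; ring
  have hconv (x : G) : e x * ((∫ y, J (x - y) * u y ∂μ : ℝ) : ℂ) =
      ((fun y => e y * u y) ⋆[ContinuousLinearMap.mul ℂ ℂ, μ] fun y => e y * J y) x := by
    rw [convolution_def, ← integral_complex_ofReal, ← integral_const_mul]
    congr 1 with y
    rw [he x y, ContinuousLinearMap.mul_apply']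
    push_cast; ring
  refine (integral_congr_ae (ae_of_all _ hconv)).trans ?_
  exact integral_convolution _ (integrable_exp_mul_ofReal hℓ hu t)
    (integrable_exp_mul_ofReal hℓ hJ t)

theorem fourierAlong_neg_of_even [MeasurableNeg G] [μ.IsNegInvariant] (ℓ : F)
    (hJ : ∀ x, J (-x) = J x) (t : ℝ) : fourierAlong μ ℓ J (-t) = fourierAlong μ ℓ J t := by
  rw [fourierAlong, ← integral_neg_eq_self]
  simp [fourierAlong, hJ]

end AddGroup

theorem tendsto_one_of_isLittleO_one_sub_mul_norm_rpow {E : Type*} [NormedAddCommGroup E]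
    {φ : E → ℂ} {a β : ℝ} (hβ : 0 < β)
    (hφ : (fun ξ => φ ξ - ((1 - a * ‖ξ‖ ^ β : ℝ) : ℂ)) =o[𝓝 0] fun ξ => ‖ξ‖ ^ β) :
    Tendsto φ (𝓝 0) (𝓝 1) := by
  have hpow : Tendsto (fun ξ : E => ‖ξ‖ ^ β) (𝓝 0) (𝓝 0) := by
    simpa [zero_rpow hβ.ne'] using
      (continuous_norm.rpow_const fun _ => Or.inr hβ.le).tendsto (0 : E)
  simpa using (hφ.trans_tendsto hpow).add ((hpow.const_mul a).ofReal.const_sub 1)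

theorem tendsto_fourierAlong_inner {E : Type*} [NormedAddCommGroup E] [InnerProductSpace ℝ E]
    [MeasurableSpace E] {μ : Measure E} {f : E → ℝ} {a β : ℝ} (hβ : 0 < β)
    (hf : (fun ξ => (∫ x, Complex.exp (-(Complex.I * ((⟪x, ξ⟫ : ℝ) : ℂ))) * (f x : ℂ) ∂μ)
        - ((1 - a * ‖ξ‖ ^ β : ℝ) : ℂ)) =o[𝓝 0] fun ξ => ‖ξ‖ ^ β) (v : E) :
    Tendsto (fourierAlong μ (fun x => ⟪x, v⟫) f) (𝓝 0) (𝓝 1) := by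
  have hline : Tendsto (fun t : ℝ => t • v) (𝓝 0) (𝓝 0) := by
    simpa using (tendsto_id (x := 𝓝 (0 : ℝ))).smul_const v
  refine ((tendsto_one_of_isLittleO_one_sub_mul_norm_rpow hβ hf).comp hline).congr fun t => ?_
  simp [fourierAlong, real_inner_smul_right]

theorem stmt14_general {N : ℕ} (J : EuclideanSpace ℝ (Fin (N + 1)) → ℝ)
    (hJint : Integrable J)
    (hJeven : ∀ x, J (-x) = J x)
    (a β : ℝ) (hβ0 : 0 < β)
    (hasymp : (fun ξ : EuclideanSpace ℝ (Fin (N + 1)) =>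
        (∫ x, Complex.exp (-(Complex.I * ((⟪x, ξ⟫ : ℝ) : ℂ))) * (J x : ℂ))
          - (((1 - a * ‖ξ‖ ^ β : ℝ)) : ℂ))
      =o[nhds 0] (fun ξ => ‖ξ‖ ^ β))
    (u Au : EuclideanSpace ℝ (Fin (N + 1)) → ℝ)
    (hu : Integrable u)
    (hAu : ∀ x, Au x = (∫ y, J (x - y) * u y) - u x)
    (hmom : Integrable (fun x : EuclideanSpace ℝ (Fin (N + 1)) => x (Fin.last N) * u x))
    (hmomA : Integrable (fun x : EuclideanSpace ℝ (Fin (N + 1)) => x (Fin.last N) * Au x)) :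
    (∫ x : EuclideanSpace ℝ (Fin (N + 1)), x (Fin.last N) * Au x) = 0 := by
  set ℓ := EuclideanSpace.proj (𝕜 := ℝ) (Fin.last N)
  obtain rfl : Au = fun x => (∫ y, J (x - y) * u y) - u x := funext hAu
  have hconv : Integrable fun x => ∫ y, J (x - y) * u y := by
    simpa only [ContinuousLinearMap.mul_apply', mul_comm] using
      (hu.convolution_integrand (.mul ℝ ℝ) hJint).integral_prod_left
  have hfactor (t : ℝ) : fourierAlong volume ℓ (fun x => (∫ y, J (x - y) * u y) - u x) t =
      (fourierAlong volume ℓ J t - 1) * fourierAlong volume ℓ u t := by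
    rw [fourierAlong_sub ℓ.measurable hconv hu, fourierAlong_convolution ℓ ℓ.measurable hJint hu]
    ring
  have hJ_one : Tendsto (fourierAlong volume ℓ J) (𝓝 0) (𝓝 1) := by
    convert tendsto_fourierAlong_inner hβ0 hasymp (EuclideanSpace.single (Fin.last N) 1) using 2
    ext x
    simp [ℓ, EuclideanSpace.inner_single_right]
  have hD := HasDerivAt.eq_zero_of_eq_mul_of_even hfactor
    (fun t => by rw [fourierAlong_neg_of_even ℓ hJeven]) (by simpa using hJ_one.sub_const 1)
    (hasDerivAt_fourierAlong_zero ℓ.measurable hu hmom).differentiableAt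
    (hasDerivAt_fourierAlong_zero ℓ.measurable (hconv.sub hu) hmomA)
  simpa [ℓ] using hD

/-- vanishing first moment of `Au`. For the self-adjoint convolution
operator `Au = J*u − u` (with `J ∈ L¹ ∩ L∞` nonnegative, even, and with
`Ĵ(ξ) = 1 − a|ξ|^β + o(|ξ|^β)` as `ξ → 0`), if `u ∈ L¹` with `∫|x_N u| < ∞` and
`∫|x_N (Au)| < ∞`, then `∫ x_N (Au)(x) dx = 0`.  Ambient space `ℝ^(N+1)`. -/
theorem stmt14 {N : ℕ} (J : EuclideanSpace ℝ (Fin (N + 1)) → ℝ)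
    (hJint : Integrable J) (hJbdd : ∃ M : ℝ, ∀ x, |J x| ≤ M) (hJpos : ∀ x, 0 ≤ J x)
    (hJeven : ∀ x, J (-x) = J x)
    (a β : ℝ) (ha : 0 < a) (hβ0 : 0 < β) (hβ2 : β ≤ 2)
    (hasymp : (fun ξ : EuclideanSpace ℝ (Fin (N + 1)) =>
        (∫ x, Complex.exp (-(Complex.I * ((⟪x, ξ⟫ : ℝ) : ℂ))) * (J x : ℂ))
          - (((1 - a * ‖ξ‖ ^ β : ℝ)) : ℂ))
      =o[nhds 0] (fun ξ => ‖ξ‖ ^ β))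
    (u Au : EuclideanSpace ℝ (Fin (N + 1)) → ℝ)
    (hu : Integrable u)
    (hAu : ∀ x, Au x = (∫ y, J (x - y) * u y) - u x)
    (hmom : Integrable (fun x : EuclideanSpace ℝ (Fin (N + 1)) => x (Fin.last N) * u x))
    (hmomA : Integrable (fun x : EuclideanSpace ℝ (Fin (N + 1)) => x (Fin.last N) * Au x)) :
    (∫ x : EuclideanSpace ℝ (Fin (N + 1)), x (Fin.last N) * Au x) = 0 :=
  stmt14_general J hJint hJeven a β hβ0 hasymp u Au hu hAu hmom hmomA
end
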